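/- arXiv:math/0510609 — 7 statements merged into one kernel-verified Lean document; each statement's English description precedes it below -/
import Mathlib

section
/- Let Ω = ⋃_{r=1}^∞ Ω_r be a set written as a countable union of subsets, and let Φ be a function from the infinite subsets of ℕ to the non-empty subsets of Ω. Assume that for all r ∈ ℕ and all infinite subsets L, M of ℕ, if L ∩ {1,…,r} = M ∩ {1,…,r} then Φ(L) ∩ Ω_r = Φ(M) ∩ Ω_r. Then there exists a function φ from the infinite subsets of ℕ to Ω such that φ(M) ∈ Φ(M) for all infinite M, and φ is continuous when Ω is given the discrete topology and the infinite subsets of ℕ the product topology from 2^ℕ. -/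
/-- Continuous selection lemma.  Infinite subsets of ℕ carry the product topology from
`2^ℕ`; continuity of `φ` into the discrete space `Ω` is expressed as local constancy:
the value `φ M` is determined by an initial segment `M ∩ {1,…,r}` of `M`. -/
theorem continuous_selection {Ω : Type*} (Ωr : ℕ → Set Ω)
    (hcover : ⋃ r, Ωr r = Set.univ)
    (Φ : {M : Set ℕ // M.Infinite} → Set Ω)
    (hne : ∀ M, (Φ M).Nonempty)
    (hstab : ∀ (r : ℕ) (L M : {M : Set ℕ // M.Infinite}),
      (∀ i ∈ Set.Icc 1 r, (i ∈ L.1 ↔ i ∈ M.1)) → Φ L ∩ Ωr r = Φ M ∩ Ωr r) :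
    ∃ φ : {M : Set ℕ // M.Infinite} → Ω,
      (∀ M, φ M ∈ Φ M) ∧
      (∀ M, ∃ r : ℕ, ∀ L, (∀ i ∈ Set.Icc 1 r, (i ∈ L.1 ↔ i ∈ M.1)) → φ L = φ M) := by
  classical
  have hex : ∀ M, ∃ r, (Φ M ∩ Ωr r).Nonempty := by
    intro M
    obtain ⟨x, hx⟩ := hne M
    have hx' : x ∈ ⋃ r, Ωr r := hcover ▸ Set.mem_univ x
    obtain ⟨r, hr⟩ := Set.mem_iUnion.1 hx'
    exact ⟨r, x, hx, hr⟩
  set r : {M : Set ℕ // M.Infinite} → ℕ := fun M => Nat.find (hex M) with hrdef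
  have hr : ∀ M, (Φ M ∩ Ωr (r M)).Nonempty := fun M => Nat.find_spec (hex M)
  have key : ∀ L M, (∀ i ∈ Set.Icc 1 (r M), (i ∈ L.1 ↔ i ∈ M.1)) →
      Φ L ∩ Ωr (r L) = Φ M ∩ Ωr (r M) := by
    intro L M hLM
    have hagree : ∀ k ≤ r M, ∀ i ∈ Set.Icc 1 k, (i ∈ L.1 ↔ i ∈ M.1) := by
      intro k hk i hi
      exact hLM i ⟨hi.1, hi.2.trans hk⟩
    have heqM : Φ L ∩ Ωr (r M) = Φ M ∩ Ωr (r M) := hstab _ L M hLM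
    have hrLle : r L ≤ r M := Nat.find_le (by rw [heqM]; exact hr M)
    have heqL : Φ L ∩ Ωr (r L) = Φ M ∩ Ωr (r L) := hstab _ L M (hagree _ hrLle)
    have hrMle : r M ≤ r L := Nat.find_le (by rw [← heqL]; exact hr L)
    have hrr : r L = r M := le_antisymm hrLle hrMle
    rw [hrr, heqM]
  have some_eq : ∀ (S T : Set Ω) (hS : S.Nonempty) (hT : T.Nonempty),
      S = T → hS.some = hT.some := by
    intro S T hS hT h; subst h; rfl
  refine ⟨fun M => (hr M).some, fun M => ((hr M).some_mem).1, fun M => ⟨r M, fun L hLM => ?_⟩⟩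
  exact some_eq _ _ (hr L) (hr M) (key L M hLM)
end

section
/- Let f be a continuous function from the infinite subsets of ℕ (product topology) to c₀ (topology of pointwise convergence on ℕ), written M ↦ f_M, such that every sequence in the image of f has a cluster point in c₀. Then for every ε > 0 and every infinite subset M of ℕ there exists an infinite subset N of M such that for all infinite subsets P of N, ∑_{i ∈ N \ P} |f_P(i)| ≤ ε. -/
/-!
Call `Q` heavy for `(τ, i, δ)` when `δ < |f_{τ ∪ Q}(i)|`. Continuity of `f` makes heaviness an
open condition, so the Galvin–Prikry theorem for open sets (Nash-Williams' accept/reject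
argument) applies to it. Given a finite `F` and an infinite `A`, this yields a
point `m ∈ A` and an infinite `B ⊆ A` above `m` with `|f_{τ ∪ Q}(m)| ≤ δ` for all `τ ⊆ F` and
`Q ⊆ B`: otherwise a fusion sequence `n_0 < n_1 < ⋯`, Galvin–Prikry and a pigeonhole on `τ`
produce sets `τ ∪ {n_j : j > m}` whose values at the points `n_k`, `k ≤ m`, all exceed `δ`, so
no cluster point of them tends to `0`. A second fusion with `δ_k = ε / 2^(k+1)` gives
`N = {n_0 < n_1 < ⋯}`: if `P ⊆ N` misses `n_k`, then `P` is a subset of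
`{n_0, …, n_(k-1)}` together with a subset of `{n_j : j > k}`, so `|f_P(n_k)| ≤ ε / 2^(k+1)`.
-/

open Filter Set Topology

theorem Set.Infinite.inter_Ioi {A : Set ℕ} (hA : A.Infinite) (n : ℕ) :
    (A ∩ Ioi n).Infinite := by
  refine infinite_of_forall_exists_gt fun a => ?_
  obtain ⟨b, hb, hab⟩ := hA.exists_gt (max a n)
  exact ⟨b, ⟨hb, (le_max_right a n).trans_lt hab⟩, (le_max_left a n).trans_lt hab⟩

theorem StrictMono.range_inter_Ioi_eq {α β : Type*} [LinearOrder α] [Preorder β] {n : α → β}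
    (hn : StrictMono n) (k : α) : range n ∩ Ioi (n k) = n '' Ioi k := by
  rw [← image_preimage_eq_range_inter]
  exact congrArg _ ((OrderEmbedding.ofStrictMono n hn).preimage_Ioi k)

theorem StrictMono.range_inter_Iio_eq {α β : Type*} [LinearOrder α] [Preorder β] {n : α → β}
    (hn : StrictMono n) (k : α) : range n ∩ Iio (n k) = n '' Iio k := by
  rw [← image_preimage_eq_range_inter]
  exact congrArg _ ((OrderEmbedding.ofStrictMono n hn).preimage_Iio k)

theorem StrictMono.range_inter_Iic_eq {α β : Type*} [LinearOrder α] [Preorder β] {n : α → β}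
    (hn : StrictMono n) (k : α) : range n ∩ Iic (n k) = n '' Iic k := by
  rw [← image_preimage_eq_range_inter]
  exact congrArg _ ((OrderEmbedding.ofStrictMono n hn).preimage_Iic k)

theorem inter_Iio_union_inter_Ioi {α : Type*} [LinearOrder α] {P : Set α} {a : α}
    (ha : a ∉ P) : P ∩ Iio a ∪ P ∩ Ioi a = P := by
  rw [← inter_union_distrib_left, Iio_union_Ioi, ← sdiff_eq, sdiff_singleton_eq_self ha]

theorem sum_le_of_le_geometric {a : ℕ → ℝ} {ε : ℝ} (hε : 0 ≤ ε) (t : Finset ℕ)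
    (ha : ∀ k ∈ t, a k ≤ ε / 2 / 2 ^ k) : ∑ k ∈ t, a k ≤ ε :=
  calc ∑ k ∈ t, a k ≤ ∑ k ∈ t, ε / 2 / 2 ^ k := Finset.sum_le_sum ha
    _ ≤ ∑' k, ε / 2 / 2 ^ k := (summable_geometric_two' ε).sum_le_tsum t fun _ _ => by positivity
    _ = ε := tsum_geometric_two' ε

theorem exists_strictMono_forall_eq_of_mem {α : Type*} {s : Set α} (hs : s.Finite) {τ : ℕ → α}
    (hτ : ∀ k, τ k ∈ s) : ∃ a, ∃ φ : ℕ → ℕ, StrictMono φ ∧ ∀ i, τ (φ i) = a := by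
  have := hs.to_subtype
  obtain ⟨a, ha⟩ := Finite.exists_infinite_fiber fun k => (⟨τ k, hτ k⟩ : s)
  have hfreq : ∃ᶠ k in atTop, τ k = a := by
    rw [Nat.frequently_atTop_iff_infinite]
    convert infinite_coe_iff.mp ha using 1
    ext k
    simp [Subtype.ext_iff]
  exact ⟨a, extraction_of_frequently_atTop hfreq⟩

theorem MapClusterPt.exists_frequently_abs_lt {α : Type*} {l : Filter α} {g : α → ℕ → ℝ}
    {x : ℕ → ℝ} (hx : MapClusterPt x l g) (hx0 : Tendsto x atTop (𝓝 0)) {n : ℕ → ℕ}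
    (hn : Tendsto n atTop atTop) {δ : ℝ} (hδ : 0 < δ) :
    ∃ k, ∃ᶠ m in l, |g m (n k)| < δ := by
  obtain ⟨k, hk⟩ := ((hx0.comp hn).abs.eventually (gt_mem_nhds (by simpa using hδ))).exists
  exact ⟨k, hx.frequently ((isOpen_lt (continuous_abs.comp (continuous_apply _))
    continuous_const).mem_nhds hk)⟩

namespace GalvinPrikry

theorem strictMono_of_nested {a : ℕ → ℕ} {C : ℕ → Set ℕ} (ha : ∀ k, a k ∈ C k)
    (hC : ∀ k, C (k + 1) ⊆ C k ∩ Ioi (a k)) :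
    StrictMono a ∧ range a ⊆ C 0 ∧ ∀ k, a '' Ioi k ⊆ C (k + 1) := by
  have hanti : Antitone C := antitone_nat_of_succ_le fun k => (hC k).trans inter_subset_left
  refine ⟨strictMono_nat_of_lt_succ fun k => (hC k (ha (k + 1))).2, ?_, ?_⟩
  · rintro _ ⟨l, rfl⟩
    exact hanti l.zero_le (ha l)
  · rintro k _ ⟨l, hl, rfl⟩
    exact hanti (Nat.succ_le_of_lt hl) (ha l)

theorem exists_fusion_of_invariant (I : Set ℕ → Set ℕ → Prop)
    (P : ℕ → Set ℕ → ℕ → Set ℕ → Prop)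
    (hstep : ∀ k F C, F.Finite → C.Infinite → I F C →
      ∃ m ∈ C, ∃ B ⊆ C ∩ Ioi m, B.Infinite ∧ I (insert m F) B ∧ P k F m B)
    {A : Set ℕ} (hA : A.Infinite) (h0 : I ∅ A) :
    ∃ n : ℕ → ℕ, StrictMono n ∧ range n ⊆ A ∧
      ∀ k, ∃ B, n '' Ioi k ⊆ B ∧ I (n '' Iic k) B ∧ P k (n '' Iio k) (n k) B := by
  choose! pt hpt next hnext hinf hI hP using hstep
  let state : ℕ → Set ℕ × Set ℕ := fun k =>
    Nat.rec (∅, A) (fun k s => (insert (pt k s.1 s.2) s.1, next k s.1 s.2)) k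
  have hgood : ∀ k, (state k).1.Finite ∧ (state k).2.Infinite ∧ I (state k).1 (state k).2 := by
    intro k
    induction k with
    | zero => exact ⟨finite_empty, hA, h0⟩
    | succ k ih =>
      exact ⟨ih.1.insert _, hinf k _ _ ih.1 ih.2.1 ih.2.2, hI k _ _ ih.1 ih.2.1 ih.2.2⟩
  let n : ℕ → ℕ := fun k => pt k (state k).1 (state k).2
  have hhist : ∀ k, (state k).1 = n '' Iio k := by
    intro k
    induction k with
    | zero => simp [state]
    | succ k ih =>
      rw [Iio_add_one_eq_Iic, ← Iio_insert, image_insert_eq, ← ih]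
  obtain ⟨hn, hnA, hnB⟩ := strictMono_of_nested (C := fun k => (state k).2)
    (fun k => hpt k _ _ (hgood k).1 (hgood k).2.1 (hgood k).2.2)
    (fun k => hnext k _ _ (hgood k).1 (hgood k).2.1 (hgood k).2.2)
  refine ⟨n, hn, hnA, fun k => ⟨(state (k + 1)).2, hnB k, ?_, ?_⟩⟩
  · rw [← Iio_insert, image_insert_eq, ← hhist]
    exact (hgood (k + 1)).2.2
  · rw [← hhist]
    exact hP k _ _ (hgood k).1 (hgood k).2.1 (hgood k).2.2

theorem exists_fusion (P : ℕ → Set ℕ → ℕ → Set ℕ → Prop)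
    (hstep : ∀ k F C, F.Finite → C.Infinite →
      ∃ m ∈ C, ∃ B ⊆ C ∩ Ioi m, B.Infinite ∧ P k F m B)
    {A : Set ℕ} (hA : A.Infinite) :
    ∃ n : ℕ → ℕ, StrictMono n ∧ range n ⊆ A ∧
      ∀ k, ∃ B, n '' Ioi k ⊆ B ∧ P k (n '' Iio k) (n k) B := by
  obtain ⟨n, hn, hnA, h⟩ := exists_fusion_of_invariant (fun _ _ => True) P
    (fun k F C hF hC _ => by simpa using hstep k F C hF hC) hA trivial
  exact ⟨n, hn, hnA, fun k => (h k).imp fun _ hB => ⟨hB.1, hB.2.2⟩⟩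

def IsCantorOpen (S : Set (Set ℕ)) : Prop :=
  ∀ P ∈ S, P.Infinite → ∃ r, ∀ Q : Set ℕ, Q.Infinite → (∀ m ≤ r, m ∈ Q ↔ m ∈ P) → Q ∈ S

def IsHomogeneous (S : Set (Set ℕ)) (B : Set ℕ) : Prop :=
  (∀ Q ⊆ B, Q.Infinite → Q ∈ S) ∨ (∀ Q ⊆ B, Q.Infinite → Q ∉ S)

/-- `s ∪ Q` rather than `s` followed by `Q`: `s` need not lie below `A`. -/
def Accepts (S : Set (Set ℕ)) (s A : Set ℕ) : Prop :=
  ∀ Q ⊆ A, Q.Infinite → s ∪ Q ∈ S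

def Rejects (S : Set (Set ℕ)) (s A : Set ℕ) : Prop :=
  ∀ B ⊆ A, B.Infinite → ¬Accepts S s B

variable {S : Set (Set ℕ)}

theorem IsHomogeneous.mono {A B : Set ℕ} (h : IsHomogeneous S A) (hBA : B ⊆ A) :
    IsHomogeneous S B :=
  h.imp (fun h Q hQ => h Q (hQ.trans hBA)) (fun h Q hQ => h Q (hQ.trans hBA))

theorem Accepts.mono {s A B : Set ℕ} (h : Accepts S s A) (hBA : B ⊆ A) : Accepts S s B :=
  fun Q hQ => h Q (hQ.trans hBA)

theorem Rejects.mono {s A B : Set ℕ} (h : Rejects S s A) (hBA : B ⊆ A) : Rejects S s B :=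
  fun C hC => h C (hC.trans hBA)

theorem Accepts.union_mem {s B Q : Set ℕ} {m : ℕ} (h : Accepts S (insert m s) B) (hm : m ∈ Q)
    (hQB : Q \ {m} ⊆ B) (hQ : Q.Infinite) : s ∪ Q ∈ S := by
  have := h _ hQB (hQ.sdiff (finite_singleton m))
  rwa [insert_union, ← union_insert, insert_sdiff_singleton, insert_eq_of_mem hm] at this

theorem exists_accepts_or_rejects (s : Set ℕ) {A : Set ℕ} (hA : A.Infinite) :
    ∃ B ⊆ A, B.Infinite ∧ (Accepts S s B ∨ Rejects S s B) := by
  by_cases h : ∃ B ⊆ A, B.Infinite ∧ Accepts S s B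
  · obtain ⟨B, hBA, hB, hacc⟩ := h
    exact ⟨B, hBA, hB, Or.inl hacc⟩
  · push Not at h
    exact ⟨A, subset_rfl, hA, Or.inr h⟩

theorem Rejects.exists_rejects_insert {s A : Set ℕ} (h : Rejects S s A) (hA : A.Infinite) :
    ∃ B ⊆ A, B.Infinite ∧ ∀ m ∈ B, Rejects S (insert m s) (B ∩ Ioi m) := by
  obtain ⟨n, hn, hnA, hdec⟩ := exists_fusion
    (fun _ _ m B => Accepts S (insert m s) B ∨ Rejects S (insert m s) B)
    (fun _ _ C _ hC => ⟨hC.nonempty.some, hC.nonempty.some_mem,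
      exists_accepts_or_rejects _ (hC.inter_Ioi _)⟩) hA
  replace hdec (k : ℕ) :
      Accepts S (insert (n k) s) (n '' Ioi k) ∨ Rejects S (insert (n k) s) (n '' Ioi k) := by
    obtain ⟨B, hB, hdec⟩ := hdec k
    exact hdec.imp (·.mono hB) (·.mono hB)
  have hJ : {k | Accepts S (insert (n k) s) (n '' Ioi k)}.Finite := by
    refine not_infinite.mp fun hJ => ?_
    refine h _ ((image_subset_range _ _).trans hnA) (hJ.image hn.injective.injOn)
      fun Q hQ hQi => ?_
    have hmin := Nat.sInf_mem hQi.nonempty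
    obtain ⟨j, hj, hjQ⟩ := hQ hmin
    refine hj.union_mem (hjQ ▸ hmin) ?_ hQi
    rw [← hn.range_inter_Ioi_eq, hjQ]
    exact fun q hq => ⟨(image_subset_range _ _) (hQ hq.1),
      (Nat.sInf_le hq.1).lt_of_ne (Ne.symm hq.2)⟩
  obtain ⟨K, hK⟩ := hJ.bddAbove
  refine ⟨n '' Ioi K, (image_subset_range _ _).trans hnA,
    (Ioi_infinite K).image hn.injective.injOn, ?_⟩
  rintro _ ⟨k, hk, rfl⟩
  refine ((hdec k).resolve_left fun hacc => (hK hacc).not_gt hk).mono ?_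
  rw [← hn.range_inter_Ioi_eq k]
  exact inter_subset_inter_left _ (image_subset_range _ _)

theorem exists_forall_rejects_insert {E : Set (Set ℕ)} (hE : E.Finite) {A : Set ℕ}
    (hA : A.Infinite) (h : ∀ s ∈ E, Rejects S s A) :
    ∃ B ⊆ A, B.Infinite ∧ ∀ s ∈ E, ∀ m ∈ B, Rejects S (insert m s) (B ∩ Ioi m) := by
  induction E, hE using Set.Finite.induction_on generalizing A with
  | empty => exact ⟨A, subset_rfl, hA, by simp⟩
  | @insert s₀ E _ _ ih =>
    obtain ⟨B₀, hB₀A, hB₀, hB₀rej⟩ := (h s₀ (mem_insert _ _)).exists_rejects_insert hA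
    obtain ⟨B, hBB₀, hB, hBrej⟩ :=
      ih hB₀ fun s hs => (h s (mem_insert_of_mem _ hs)).mono hB₀A
    refine ⟨B, hBB₀.trans hB₀A, hB, ?_⟩
    rintro s (rfl | hs) m hm
    · exact (hB₀rej m (hBB₀ hm)).mono (inter_subset_inter_left _ hBB₀)
    · exact hBrej s hs m hm

theorem exists_forall_subset_insert_rejects {F C : Set ℕ} (hF : F.Finite) (hC : C.Infinite)
    (hrej : ∀ t ⊆ F, Rejects S t C) :
    ∃ m ∈ C, ∃ B ⊆ C ∩ Ioi m, B.Infinite ∧ ∀ t ⊆ insert m F, Rejects S t B := by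
  obtain ⟨B, hBC, hB, hBrej⟩ := exists_forall_rejects_insert hF.powerset hC hrej
  obtain ⟨m, hm⟩ := hB.nonempty
  refine ⟨m, hBC hm, B ∩ Ioi m, inter_subset_inter_left _ hBC, hB.inter_Ioi m, fun t ht => ?_⟩
  by_cases hmt : m ∈ t
  · rw [← insert_eq_of_mem hmt, ← insert_sdiff_singleton]
    exact hBrej _ (sdiff_singleton_subset_iff.mpr ht) m hm
  · exact (hrej t ((subset_insert_iff_of_notMem hmt).mp ht)).mono (inter_subset_left.trans hBC)

theorem exists_isHomogeneous (hS : IsCantorOpen S) {A : Set ℕ} (hA : A.Infinite) :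
    ∃ B ⊆ A, B.Infinite ∧ IsHomogeneous S B := by
  by_cases hacc : ∃ B ⊆ A, B.Infinite ∧ Accepts S ∅ B
  · obtain ⟨B, hBA, hB, hacc⟩ := hacc
    exact ⟨B, hBA, hB, Or.inl fun Q hQ hQi => by simpa using hacc Q hQ hQi⟩
  push Not at hacc
  obtain ⟨n, hn, hnA, hrej⟩ := exists_fusion_of_invariant (fun F C => ∀ t ⊆ F, Rejects S t C)
    (fun _ _ _ _ => True)
    (fun _ _ _ hF hC hrej => (exists_forall_subset_insert_rejects hF hC hrej).imp
      fun _ ⟨hm, B, hB⟩ => ⟨hm, B, hB.1, hB.2.1, hB.2.2, trivial⟩)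
    hA (fun t ht => by rwa [subset_empty_iff.mp ht])
  refine ⟨range n, hnA, infinite_range_of_injective hn.injective, Or.inr fun Q hQ hQi hQS => ?_⟩
  -- openness at `Q` would make the tail `n '' Ioi r` accept the initial segment `Q ∩ Iic (n r)`
  obtain ⟨r, hr⟩ := hS Q hQS hQi
  obtain ⟨B, hB, hrejB, -⟩ := hrej r
  have hQr : Q ∩ Iic (n r) ⊆ n '' Iic r := by
    rw [← hn.range_inter_Iic_eq]
    exact inter_subset_inter_left _ hQ
  refine hrejB _ hQr _ hB ((Ioi_infinite r).image hn.injective.injOn) fun Q' hQ' hQ'i => ?_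
  refine hr _ (hQ'i.mono subset_union_right) fun m hm => ?_
  have hmQ' : m ∉ Q' := by
    rintro hmQ'
    obtain ⟨l, hl, rfl⟩ := hQ' hmQ'
    exact (hm.trans (hn.id_le r)).not_gt (hn hl)
  simp [hmQ', hm.trans (hn.id_le r)]

theorem exists_forall_isHomogeneous {ι : Type*} {E : Set ι} (hE : E.Finite)
    {S : ι → Set (Set ℕ)} (hS : ∀ i ∈ E, IsCantorOpen (S i)) {A : Set ℕ} (hA : A.Infinite) :
    ∃ B ⊆ A, B.Infinite ∧ ∀ i ∈ E, IsHomogeneous (S i) B := by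
  induction E, hE using Set.Finite.induction_on generalizing A with
  | empty => exact ⟨A, subset_rfl, hA, by simp⟩
  | @insert i₀ E _ _ ih =>
    obtain ⟨B₀, hB₀A, hB₀, hhom₀⟩ := exists_isHomogeneous (hS i₀ (mem_insert _ _)) hA
    obtain ⟨B, hBB₀, hB, hhom⟩ := ih (fun i hi => hS i (mem_insert_of_mem _ hi)) hB₀
    refine ⟨B, hBB₀.trans hB₀A, hB, ?_⟩
    rintro i (rfl | hi)
    · exact hhom₀.mono hBB₀
    · exact hhom i hi

end GalvinPrikry

open GalvinPrikry

namespace SupportStabilization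

def heavySet (f : {M : Set ℕ // M.Infinite} → ℕ → ℝ) (τ : Set ℕ) (i : ℕ) (δ : ℝ) :
    Set (Set ℕ) :=
  {Q | ∃ h : (τ ∪ Q).Infinite, δ < |f ⟨τ ∪ Q, h⟩ i|}

variable {f : {M : Set ℕ // M.Infinite} → ℕ → ℝ}

theorem isCantorOpen_heavySet
    (hcont : ∀ (M : {M : Set ℕ // M.Infinite}) (i : ℕ) (ε : ℝ), 0 < ε →
      ∃ r : ℕ, ∀ L, (∀ n ≤ r, (n ∈ L.1 ↔ n ∈ M.1)) → |f L i - f M i| < ε)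
    (τ : Set ℕ) (i : ℕ) (δ : ℝ) : IsCantorOpen (heavySet f τ i δ) := by
  rintro P ⟨hP, hlt⟩ -
  obtain ⟨r, hr⟩ := hcont ⟨τ ∪ P, hP⟩ i _ (sub_pos.mpr hlt)
  refine ⟨r, fun Q hQ hQP => ⟨hQ.mono subset_union_right, ?_⟩⟩
  have hclose := hr ⟨τ ∪ Q, hQ.mono subset_union_right⟩ fun m hm => by simp [hQP m hm]
  rw [abs_sub_comm] at hclose
  linarith [abs_sub_abs_le_abs_sub (f ⟨τ ∪ P, hP⟩ i) (f ⟨τ ∪ Q, hQ.mono subset_union_right⟩ i)]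

theorem not_forall_mem_heavySet
    (hcluster : ∀ u : ℕ → {M : Set ℕ // M.Infinite},
      ∃ x : ℕ → ℝ, Tendsto x atTop (nhds 0) ∧ MapClusterPt x atTop (fun n => f (u n)))
    {n : ℕ → ℕ} (hn : StrictMono n) (τ : Set ℕ) {δ : ℝ} (hδ : 0 < δ) :
    ¬∀ k, ∀ Q ⊆ n '' Ioi k, Q.Infinite → Q ∈ heavySet f τ (n k) δ := by
  intro hheavy
  have htail (m : ℕ) : (τ ∪ n '' Ioi m).Infinite :=
    ((Ioi_infinite m).image hn.injective.injOn).mono subset_union_right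
  obtain ⟨x, hx0, hx⟩ := hcluster fun m => ⟨τ ∪ n '' Ioi m, htail m⟩
  obtain ⟨k, hk⟩ := hx.exists_frequently_abs_lt hx0 hn.tendsto_atTop hδ
  obtain ⟨m, hm, hkm⟩ := (hk.and_eventually (eventually_ge_atTop k)).exists
  obtain ⟨_, hlt⟩ := hheavy k _ (image_mono (Ioi_subset_Ioi hkm))
    ((Ioi_infinite m).image hn.injective.injOn)
  exact hm.not_ge hlt.le

theorem exists_forall_abs_le
    (hcont : ∀ (M : {M : Set ℕ // M.Infinite}) (i : ℕ) (ε : ℝ), 0 < ε →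
      ∃ r : ℕ, ∀ L, (∀ n ≤ r, (n ∈ L.1 ↔ n ∈ M.1)) → |f L i - f M i| < ε)
    (hcluster : ∀ u : ℕ → {M : Set ℕ // M.Infinite},
      ∃ x : ℕ → ℝ, Tendsto x atTop (nhds 0) ∧ MapClusterPt x atTop (fun n => f (u n)))
    {F A : Set ℕ} (hF : F.Finite) (hA : A.Infinite) {δ : ℝ} (hδ : 0 < δ) :
    ∃ m ∈ A, ∃ B ⊆ A ∩ Ioi m, B.Infinite ∧
      ∀ τ ⊆ F, ∀ Q ⊆ B, ∀ h : (τ ∪ Q).Infinite, |f ⟨τ ∪ Q, h⟩ m| ≤ δ := by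
  by_contra! hlight
  have hstep : ∀ C ⊆ A, C.Infinite → ∃ m ∈ C, ∃ B ⊆ C ∩ Ioi m, B.Infinite ∧
      ∃ τ ⊆ F, ∀ Q ⊆ B, Q.Infinite → Q ∈ heavySet f τ m δ := by
    intro C hCA hC
    obtain ⟨m, hm⟩ := hC.nonempty
    obtain ⟨B, hBC, hB, hhom⟩ := exists_forall_isHomogeneous hF.powerset
      (fun τ _ => isCantorOpen_heavySet hcont τ m δ) (hC.inter_Ioi m)
    obtain ⟨τ, hτ, Q, hQB, hQ, hheavy⟩ :=
      hlight m (hCA hm) B (hBC.trans (inter_subset_inter_left _ hCA)) hB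
    have hQinf : Q.Infinite := (infinite_union.mp hQ).resolve_left (hF.subset hτ).not_infinite
    exact ⟨m, hm, B, hBC, hB, τ, hτ,
      (hhom τ hτ).resolve_right fun hnone => hnone Q hQB hQinf ⟨hQ, hheavy⟩⟩
  obtain ⟨n, hn, -, hheavy⟩ := exists_fusion_of_invariant (fun _ C => C ⊆ A)
    (fun _ _ m B => ∃ τ ⊆ F, ∀ Q ⊆ B, Q.Infinite → Q ∈ heavySet f τ m δ)
    (fun _ _ C _ hC hCA => (hstep C hCA hC).imp fun _ ⟨hm, B, hBC, hB, hτ⟩ =>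
      ⟨hm, B, hBC, hB, hBC.trans (inter_subset_left.trans hCA), hτ⟩) hA subset_rfl
  choose B hB _ τ hτF hτ using hheavy
  obtain ⟨τ₀, φ, hφ, hτφ⟩ := exists_strictMono_forall_eq_of_mem hF.powerset hτF
  refine not_forall_mem_heavySet hcluster (hn.comp hφ) τ₀ hδ fun k Q hQ hQinf => ?_
  rw [← hτφ k]
  refine hτ (φ k) Q (hQ.trans ?_) hQinf
  rw [image_comp]
  exact (image_mono (image_subset_iff.mpr fun l hl => hφ hl)).trans (hB (φ k))

end SupportStabilization

open SupportStabilization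

theorem support_stabilization_general
    (f : {M : Set ℕ // M.Infinite} → ℕ → ℝ)
    (hcont : ∀ (M : {M : Set ℕ // M.Infinite}) (i : ℕ) (ε : ℝ), 0 < ε →
      ∃ r : ℕ, ∀ L, (∀ n ≤ r, (n ∈ L.1 ↔ n ∈ M.1)) → |f L i - f M i| < ε)
    (hcluster : ∀ u : ℕ → {M : Set ℕ // M.Infinite},
      ∃ x : ℕ → ℝ, Tendsto x atTop (nhds 0) ∧ MapClusterPt x atTop (fun n => f (u n))) :
    ∀ ε : ℝ, 0 < ε → ∀ M : {M : Set ℕ // M.Infinite},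
      ∃ N : {N : Set ℕ // N.Infinite}, N.1 ⊆ M.1 ∧
        ∀ P : {P : Set ℕ // P.Infinite}, P.1 ⊆ N.1 →
          ∀ s : Finset ℕ, (↑s : Set ℕ) ⊆ N.1 \ P.1 → ∑ i ∈ s, |f P i| ≤ ε := by
  intro ε hε M
  obtain ⟨n, hn, hnM, hlight⟩ := exists_fusion
    (fun k F m B => ∀ τ ⊆ F, ∀ Q ⊆ B, ∀ h : (τ ∪ Q).Infinite, |f ⟨τ ∪ Q, h⟩ m| ≤ ε / 2 / 2 ^ k)
    (fun k _ _ hF hC => exists_forall_abs_le hcont hcluster hF hC (by positivity)) M.2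
  refine ⟨⟨range n, infinite_range_of_injective hn.injective⟩, hnM, ?_⟩
  rintro ⟨P, hP⟩ hPn s hs
  have hbound (k : ℕ) (hk : n k ∉ P) : |f ⟨P, hP⟩ (n k)| ≤ ε / 2 / 2 ^ k := by
    obtain ⟨B, hB, hlightk⟩ := hlight k
    have hsplit := inter_Iio_union_inter_Ioi hk
    have := hlightk _ (hn.range_inter_Iio_eq k ▸ inter_subset_inter_left _ hPn) _
      ((hn.range_inter_Ioi_eq k ▸ inter_subset_inter_left _ hPn).trans hB) (by rwa [hsplit])
    simpa only [hsplit] using this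
  have hsn : (s : Set ℕ) ⊆ n '' univ := image_univ.symm ▸ hs.trans sdiff_subset
  obtain ⟨t, -, rfl⟩ := Finset.subset_set_image_iff.mp hsn
  rw [Finset.sum_image fun _ _ _ _ h => hn.injective h]
  exact sum_le_of_le_geometric hε.le t fun k hk =>
    hbound k (hs (Finset.mem_coe.mpr (Finset.mem_image_of_mem n hk))).2

/-- Support stabilization lemma.  `f` maps infinite subsets of ℕ (product topology from
`2^ℕ`) to `c₀` with the topology of pointwise convergence; continuity is expressed via
the standard basis of both topologies.  Every sequence in the image of `f` is assumed to
have a cluster point (for pointwise convergence, i.e. in `ℕ → ℝ` with the product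
topology) which lies in `c₀`.  The conclusion `∑_{i ∈ N \ P} |f_P(i)| ≤ ε` is expressed
via all finite partial sums. -/
theorem support_stabilization
    (f : {M : Set ℕ // M.Infinite} → ℕ → ℝ)
    (hc0 : ∀ M, Tendsto (f M) atTop (nhds 0))
    (hcont : ∀ (M : {M : Set ℕ // M.Infinite}) (i : ℕ) (ε : ℝ), 0 < ε →
      ∃ r : ℕ, ∀ L, (∀ n ≤ r, (n ∈ L.1 ↔ n ∈ M.1)) → |f L i - f M i| < ε)
    (hcluster : ∀ u : ℕ → {M : Set ℕ // M.Infinite},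
      ∃ x : ℕ → ℝ, Tendsto x atTop (nhds 0) ∧ MapClusterPt x atTop (fun n => f (u n))) :
    ∀ ε : ℝ, 0 < ε → ∀ M : {M : Set ℕ // M.Infinite},
      ∃ N : {N : Set ℕ // N.Infinite}, N.1 ⊆ M.1 ∧
        ∀ P : {P : Set ℕ // P.Infinite}, P.1 ⊆ N.1 →
          ∀ s : Finset ℕ, (↑s : Set ℕ) ⊆ N.1 \ P.1 → ∑ i ∈ s, |f P i| ≤ ε :=
  support_stabilization_general f hcont hcluster
end

section
/- Let 𝒜 be a thin family of finite subsets of ℕ (no element of 𝒜 is a proper initial segment of another element of 𝒜). For each k ∈ ℕ let S_k be a finite set, and let c : 𝒜 → ⋃_k S_k be a colouring such that c(F) ∈ S_{min F} for all F ∈ 𝒜. Then for every infinite subset L of ℕ there exists an infinite subset M of L such that whenever A, B ∈ 𝒜 are finite subsets of M with min A = min B, we have c(A) = c(B). -/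
/-- `A` is an initial segment of `B`. -/
def IsInitSeg (A B : Finset ℕ) : Prop :=
  A ⊆ B ∧ ∀ b ∈ B, ∀ a ∈ A, b ≤ a → b ∈ A

namespace DiagThin

/-- `t` is a finite initial segment of the set `P`. -/
def InitSegOf (t : Finset ℕ) (P : Set ℕ) : Prop :=
  ↑t ⊆ P ∧ ∀ x ∈ P, ∀ a ∈ t, x ≤ a → x ∈ t

def above (s : Finset ℕ) (M : Set ℕ) : Set ℕ := {m | m ∈ M ∧ ∀ a ∈ s, a < m}

def Accepts (F : Set (Finset ℕ)) (M : Set ℕ) (s : Finset ℕ) : Prop :=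
  ∀ P ⊆ above s M, P.Infinite → ∃ t : Finset ℕ, InitSegOf t P ∧ s ∪ t ∈ F

def Rejects (F : Set (Finset ℕ)) (M : Set ℕ) (s : Finset ℕ) : Prop :=
  ∀ N ⊆ M, N.Infinite → ¬ Accepts F N s

lemma above_mono {s : Finset ℕ} {N M : Set ℕ} (h : N ⊆ M) : above s N ⊆ above s M :=
  fun x hx => ⟨h hx.1, hx.2⟩

lemma accepts_of_above_subset {F M N s} (h : above s N ⊆ above s M)
    (hM : Accepts F M s) : Accepts F N s :=
  fun P hP hPinf => hM P (hP.trans h) hPinf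

lemma accepts_mono {F : Set (Finset ℕ)} {M N : Set ℕ} {s} (h : N ⊆ M)
    (hM : Accepts F M s) : Accepts F N s :=
  accepts_of_above_subset (above_mono h) hM

lemma rejects_mono {F : Set (Finset ℕ)} {M N : Set ℕ} {s} (h : N ⊆ M)
    (hM : Rejects F M s) : Rejects F N s :=
  fun P hP hPinf => hM P (hP.trans h) hPinf

lemma mem_accepts {F : Set (Finset ℕ)} {M : Set ℕ} {s} (hs : s ∈ F) : Accepts F M s :=
  fun P _ _ => ⟨∅, ⟨by simp, by simp⟩, by simpa using hs⟩

lemma decide (F : Set (Finset ℕ)) (M : Set ℕ) (hM : M.Infinite) (s : Finset ℕ) :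
    ∃ N, N ⊆ M ∧ N.Infinite ∧ (Accepts F N s ∨ Rejects F N s) := by
  by_cases h : Rejects F M s
  · exact ⟨M, subset_rfl, hM, Or.inr h⟩
  · simp only [Rejects, not_forall] at h
    obtain ⟨N, hNM, hNinf, hacc⟩ := h
    exact ⟨N, hNM, hNinf, Or.inl (not_not.mp hacc)⟩

lemma decide_list (F : Set (Finset ℕ)) (l : List (Finset ℕ)) (M : Set ℕ) (hM : M.Infinite) :
    ∃ N, N ⊆ M ∧ N.Infinite ∧ ∀ s ∈ l, Accepts F N s ∨ Rejects F N s := by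
  induction l generalizing M with
  | nil => exact ⟨M, subset_rfl, hM, by simp⟩
  | cons a l ih =>
    obtain ⟨N₁, hN₁, hN₁inf, hN₁dec⟩ := ih M hM
    obtain ⟨N, hN, hNinf, hNdec⟩ := decide F N₁ hN₁inf a
    refine ⟨N, hN.trans hN₁, hNinf, ?_⟩
    intro s hs
    rcases List.mem_cons.mp hs with rfl | hs
    · exact hNdec
    · rcases hN₁dec s hs with h | h
      · exact Or.inl (accepts_mono hN h)
      · exact Or.inr (rejects_mono hN h)

lemma seq_rec {α : Type*} (init : α) (R : α → α → Prop) (h : ∀ a, ∃ b, R a b) :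
    ∃ f : ℕ → α, f 0 = init ∧ ∀ k, R (f k) (f (k + 1)) := by
  choose g hg using h
  exact ⟨fun k => Nat.rec init (fun _ a => g a) k, rfl, fun k => hg _⟩

end DiagThin

namespace DiagThin

lemma exists_decisive (F : Set (Finset ℕ)) (L : Set ℕ) (hL : L.Infinite) :
    ∃ N, N ⊆ L ∧ N.Infinite ∧
      ∀ s : Finset ℕ, ↑s ⊆ N → Accepts F N s ∨ Rejects F N s := by
  classical
  obtain ⟨M₀, hM₀L, hM₀inf, hM₀dec⟩ := decide F L hL ∅
  have step : ∀ (G : Finset ℕ) (M : Set ℕ), M.Infinite →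
      ∃ M' : Set ℕ, M' ⊆ M ∧ M'.Infinite ∧ (∀ x ∈ M', sInf M < x) ∧
        ∀ s ∈ (insert (sInf M) G).powerset, Accepts F M' s ∨ Rejects F M' s := by
    intro G M hM
    have h1 : (M \ Set.Iic (sInf M)).Infinite := hM.diff (Set.finite_Iic _)
    obtain ⟨N, hN1, hN2, hN3⟩ := decide_list F ((insert (sInf M) G).powerset.toList) _ h1
    refine ⟨N, hN1.trans Set.diff_subset, hN2, ?_, fun s hs => hN3 s (by simpa using hs)⟩
    intro x hx
    have := hN1 hx
    simp only [Set.mem_diff, Set.mem_Iic] at this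
    omega
  set R : Finset ℕ × {M : Set ℕ // M.Infinite} → Finset ℕ × {M : Set ℕ // M.Infinite} → Prop :=
    fun a b => b.1 = insert (sInf a.2.1) a.1 ∧ b.2.1 ⊆ a.2.1 ∧
      (∀ x ∈ b.2.1, sInf a.2.1 < x) ∧
      ∀ s ∈ b.1.powerset, Accepts F b.2.1 s ∨ Rejects F b.2.1 s with hR
  have hstep : ∀ a, ∃ b, R a b := by
    rintro ⟨G, M, hM⟩
    obtain ⟨M', h1, h2, h3, h4⟩ := step G M hM
    exact ⟨⟨insert (sInf M) G, M', h2⟩, rfl, h1, h3, h4⟩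
  obtain ⟨f, hf0, hf⟩ := seq_rec (⟨∅, M₀, hM₀inf⟩ : Finset ℕ × {M : Set ℕ // M.Infinite}) R hstep
  set Mk : ℕ → Set ℕ := fun k => (f k).2.1 with hMk
  set Fk : ℕ → Finset ℕ := fun k => (f k).1 with hFk
  set n : ℕ → ℕ := fun k => sInf (Mk k) with hn
  have Minf : ∀ k, (Mk k).Infinite := fun k => (f k).2.2
  have msub : ∀ k, Mk (k + 1) ⊆ Mk k := fun k => (hf k).2.1
  have mle : ∀ k j, k ≤ j → Mk j ⊆ Mk k := by
    intro k j hkj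
    induction j, hkj using Nat.le_induction with
    | base => exact subset_rfl
    | succ j hkj ih => exact (msub j).trans ih
  have nmem : ∀ k, n k ∈ Mk k := fun k => Nat.sInf_mem (Minf k).nonempty
  have nlt : ∀ k, n k < n (k + 1) := fun k => (hf k).2.2.1 _ (nmem (k + 1))
  have hmono : StrictMono n := strictMono_nat_of_lt_succ nlt
  have Fsucc : ∀ k, Fk (k + 1) = insert (n k) (Fk k) := fun k => (hf k).1
  have Fmem : ∀ k j, j < k → n j ∈ Fk k := by
    intro k
    induction k with
    | zero => omega
    | succ k ih =>
      intro j hj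
      rw [Fsucc k]
      rcases Nat.lt_succ_iff_lt_or_eq.mp hj with h | rfl
      · exact Finset.mem_insert_of_mem (ih j h)
      · exact Finset.mem_insert_self _ _
  have dec : ∀ k, ∀ s ∈ (Fk (k + 1)).powerset, Accepts F (Mk (k + 1)) s ∨ Rejects F (Mk (k + 1)) s :=
    fun k => (hf k).2.2.2
  have hM0 : Mk 0 = M₀ := by show ((f 0).2 : Set ℕ) = M₀; rw [hf0]
  have hNM₀ : ∀ k, n k ∈ M₀ := fun k => hM0 ▸ mle 0 k (Nat.zero_le k) (nmem k)
  refine ⟨Set.range n, ?_, Set.infinite_range_of_injective hmono.injective, ?_⟩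
  · rintro x ⟨k, rfl⟩
    exact hM₀L (hNM₀ k)
  intro s hs
  have hrangesub : Set.range n ⊆ M₀ := by rintro x ⟨k, rfl⟩; exact hNM₀ k
  rcases s.eq_empty_or_nonempty with rfl | hsne
  · rcases hM₀dec with h | h
    · exact Or.inl (accepts_mono hrangesub h)
    · exact Or.inr (rejects_mono hrangesub h)
  · obtain ⟨k, hk⟩ : ∃ k, n k = s.max' hsne := hs (s.max'_mem hsne)
    have hsF : s ⊆ Fk (k + 1) := by
      intro b hb
      obtain ⟨j, rfl⟩ := hs hb
      have : n j ≤ n k := hk ▸ s.le_max' _ hb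
      have : j ≤ k := hmono.le_iff_le.mp this
      exact Fmem (k + 1) j (by omega)
    have habove : above s (Set.range n) ⊆ above s (Mk (k + 1)) := by
      rintro x ⟨⟨j, rfl⟩, hx2⟩
      have hjk : k < j := by
        have : n k < n j := hk ▸ hx2 _ (s.max'_mem hsne)
        exact hmono.lt_iff_lt.mp this
      exact ⟨mle (k + 1) j hjk (nmem j), hx2⟩
    rcases dec k s (Finset.mem_powerset.mpr hsF) with h | h
    · exact Or.inl (accepts_of_above_subset habove h)
    · refine Or.inr ?_
      intro N' hN' hN'inf hacc
      have hdiff : (N' \ Mk (k + 1)).Finite := by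
        apply (Set.finite_Iic (n k)).subset
        rintro x ⟨hx1, hx2⟩
        obtain ⟨j, rfl⟩ := hN' hx1
        by_contra hlt
        simp only [Set.mem_Iic, not_le] at hlt
        have hjk : k < j := hmono.lt_iff_lt.mp hlt
        exact hx2 (mle (k + 1) j hjk (nmem j))
      have h2 : (N' ∩ Mk (k + 1)).Infinite := by
        have : N' \ (N' \ Mk (k + 1)) = N' ∩ Mk (k + 1) := by
          ext x; simp only [Set.mem_diff, Set.mem_inter_iff]; tauto
        exact this ▸ hN'inf.diff hdiff
      exact h (N' ∩ Mk (k + 1)) Set.inter_subset_right h2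
        (accepts_mono Set.inter_subset_left hacc)

end DiagThin

namespace DiagThin

theorem galvin (F : Set (Finset ℕ)) (L : Set ℕ) (hL : L.Infinite) :
    ∃ N, N ⊆ L ∧ N.Infinite ∧
      ((∀ P : Set ℕ, P ⊆ N → P.Infinite → ∃ t : Finset ℕ, InitSegOf t P ∧ t ∈ F) ∨
       (∀ s : Finset ℕ, ↑s ⊆ N → s ∉ F)) := by
  classical
  obtain ⟨N, hNL, hNinf, hdec⟩ := exists_decisive F L hL
  rcases hdec ∅ (by simp) with hacc | hrej
  · refine ⟨N, hNL, hNinf, Or.inl ?_⟩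
    intro P hP hPinf
    have hPab : P ⊆ above ∅ N := fun x hx => ⟨hP hx, by simp⟩
    obtain ⟨t, ht, htF⟩ := hacc P hPab hPinf
    exact ⟨t, ht, by simpa using htF⟩
  · -- rejection case: build a subset all of whose finite subsets are rejected by N
    have rej_step : ∀ s : Finset ℕ, ↑s ⊆ N → Rejects F N s →
        {p | p ∈ above s N ∧ ¬ Rejects F N (insert p s)}.Finite := by
      intro s hsN hrejs
      by_contra hinf
      set B := {p | p ∈ above s N ∧ ¬ Rejects F N (insert p s)} with hB
      have hBN : B ⊆ N := fun p hp => hp.1.1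
      have hBinf : B.Infinite := hinf
      have hBacc : Accepts F B s := by
        intro P hP hPinf
        set p := sInf P with hp
        have hpP : p ∈ P := Nat.sInf_mem hPinf.nonempty
        have hpB : p ∈ B := (hP hpP).1
        have hpN : p ∈ N := hBN hpB
        have haccins : Accepts F N (insert p s) := by
          have := hdec (insert p s) (by
            rw [Finset.coe_insert]
            exact Set.insert_subset hpN hsN)
          exact this.resolve_right hpB.2
        set P' := P \ Set.Iic p with hP'
        have hP'sub : P' ⊆ above (insert p s) N := by
          rintro x ⟨hx1, hx2⟩
          simp only [Set.mem_Iic, not_le] at hx2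
          obtain ⟨hxB, hxs⟩ := hP hx1
          refine ⟨hBN hxB, ?_⟩
          intro a ha
          rcases Finset.mem_insert.mp ha with rfl | ha
          · exact hx2
          · exact hxs a ha
        have hP'inf : P'.Infinite := hPinf.diff (Set.finite_Iic p)
        obtain ⟨t, ht, htF⟩ := haccins P' hP'sub hP'inf
        refine ⟨insert p t, ⟨?_, ?_⟩, ?_⟩
        · rw [Finset.coe_insert]
          exact Set.insert_subset hpP (ht.1.trans Set.diff_subset)
        · intro x hxP a ha hxa
          rcases eq_or_lt_of_le (Nat.sInf_le hxP : p ≤ x) with heq | hlt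
          · exact heq ▸ Finset.mem_insert_self _ _
          · rcases Finset.mem_insert.mp ha with rfl | hat
            · omega
            · have hxP' : x ∈ P' := ⟨hxP, by simp only [Set.mem_Iic, not_le]; exact hlt⟩
              exact Finset.mem_insert_of_mem (ht.2 x hxP' a hat hxa)
        · rw [Finset.union_insert]
          rwa [Finset.insert_union] at htF
      exact hrejs B hBN hBinf hBacc
    -- recursion building the subset
    set α := {G : Finset ℕ // ↑G ⊆ N ∧ ∀ s ∈ G.powerset, Rejects F N s} with hα
    have hstep : ∀ a : α, ∃ b : α, ∃ p ∈ N, (∀ x ∈ a.1, x < p) ∧ b.1 = insert p a.1 := by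
      rintro ⟨G, hGN, hGrej⟩
      have hbad : (⋃ s ∈ G.powerset, {p | p ∈ above s N ∧ ¬ Rejects F N (insert p s)}).Finite := by
        apply Set.Finite.biUnion (G.powerset.finite_toSet)
        intro s hs
        exact rej_step s ((Finset.coe_subset.mpr (Finset.mem_powerset.mp hs)).trans hGN)
          (hGrej s hs)
      have hgood : (N \ ((⋃ s ∈ G.powerset, {p | p ∈ above s N ∧ ¬ Rejects F N (insert p s)}) ∪
          Set.Iic (G.sup id))).Infinite :=
        hNinf.diff (hbad.union (Set.finite_Iic _))
      obtain ⟨p, hp⟩ := hgood.nonempty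
      simp only [Set.mem_diff, Set.mem_union, Set.mem_Iic, not_or, not_le] at hp
      obtain ⟨hpN, hpbad, hpsup⟩ := hp
      have hplt : ∀ x ∈ G, x < p := fun x hx =>
        lt_of_le_of_lt (Finset.le_sup (f := id) hx) hpsup
      have hrejins : ∀ s ∈ G.powerset, Rejects F N (insert p s) := by
        intro s hs
        simp only [Set.mem_iUnion, not_exists] at hpbad
        have := hpbad s
        simp only [hs, Set.mem_setOf_eq, not_and, not_not, exists_prop, true_implies] at this
        apply this
        exact ⟨hpN, fun a ha => hplt a (Finset.mem_powerset.mp hs ha)⟩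
      refine ⟨⟨insert p G, ?_, ?_⟩, p, hpN, hplt, rfl⟩
      · rw [Finset.coe_insert]; exact Set.insert_subset hpN hGN
      · intro s hs
        have hs' := Finset.mem_powerset.mp hs
        by_cases hps : p ∈ s
        · have : s = insert p (s.erase p) := (Finset.insert_erase hps).symm
          rw [this]
          exact hrejins (s.erase p)
            (Finset.mem_powerset.mpr (Finset.subset_insert_iff.mp hs'))
        · exact hGrej s (Finset.mem_powerset.mpr fun x hx =>
            (Finset.mem_insert.mp (hs' hx)).resolve_left (fun h => hps (h ▸ hx)) )
    obtain ⟨g, hg0, hg⟩ := seq_rec (⟨∅, by simp, by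
      intro s hs
      rw [Finset.mem_powerset, Finset.subset_empty] at hs
      exact hs ▸ hrej⟩ : α) _ hstep
    choose p hpN hplt hgsucc using hg
    have pmem : ∀ k, p k ∈ (g (k + 1)).1 := fun k => (hgsucc k) ▸ Finset.mem_insert_self _ _
    have pmono : StrictMono p := by
      apply strictMono_nat_of_lt_succ
      intro k
      exact hplt (k + 1) (p k) (pmem k)
    have pmemall : ∀ k j, j < k → p j ∈ (g k).1 := by
      intro k
      induction k with
      | zero => omega
      | succ k ih =>
        intro j hj
        rw [hgsucc k]
        rcases Nat.lt_succ_iff_lt_or_eq.mp hj with h | rfl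
        · exact Finset.mem_insert_of_mem (ih j h)
        · exact Finset.mem_insert_self _ _
    refine ⟨Set.range p, ?_, Set.infinite_range_of_injective pmono.injective, Or.inr ?_⟩
    · rintro x ⟨k, rfl⟩; exact hNL (hpN k)
    intro s hs hsF
    have hrejs : Rejects F N s := by
      rcases s.eq_empty_or_nonempty with rfl | hsne
      · exact hrej
      · obtain ⟨k, hk⟩ : ∃ k, p k = s.max' hsne := hs (s.max'_mem hsne)
        have hsub : s ⊆ (g (k + 1)).1 := by
          intro b hb
          obtain ⟨j, rfl⟩ := hs hb
          have : p j ≤ p k := hk ▸ s.le_max' _ hb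
          exact pmemall (k + 1) j (by have := pmono.le_iff_le.mp this; omega)
        exact (g (k + 1)).2.2 s (Finset.mem_powerset.mpr hsub)
    exact hrejs N subset_rfl hNinf (mem_accepts hsF)

end DiagThin

namespace DiagThin

lemma comparable {t A : Finset ℕ} {P : Set ℕ} (ht : InitSegOf t P) (hA : InitSegOf A P) :
    IsInitSeg t A ∨ IsInitSeg A t := by
  have hsub : t ⊆ A ∨ A ⊆ t := by
    by_contra h
    push_neg at h
    obtain ⟨a, hat, haA⟩ := Finset.not_subset.mp h.1
    obtain ⟨b, hbA, hbt⟩ := Finset.not_subset.mp h.2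
    rcases le_total a b with hab | hba
    · exact haA (hA.2 a (ht.1 hat) b hbA hab)
    · exact hbt (ht.2 b (hA.1 hbA) a hat hba)
  rcases hsub with h | h
  · exact Or.inl ⟨h, fun b hb a ha hba => ht.2 b (hA.1 hb) a ha hba⟩
  · exact Or.inr ⟨h, fun b hb a ha hba => hA.2 b (ht.1 hb) a ha hba⟩

lemma thin_pair (𝒜 : Set (Finset ℕ))
    (hthin : ∀ A ∈ 𝒜, ∀ B ∈ 𝒜, IsInitSeg A B → A = B)
    (Pfam : Set (Finset ℕ)) (L : Set ℕ) (hL : L.Infinite) :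
    ∃ N, N ⊆ L ∧ N.Infinite ∧
      ((∀ A ∈ 𝒜, ↑A ⊆ N → A ∈ Pfam) ∨ (∀ A ∈ 𝒜, A ∈ Pfam → ¬ (↑A : Set ℕ) ⊆ N)) := by
  obtain ⟨N, hNL, hNinf, hcase⟩ := galvin (𝒜 ∩ Pfam) L hL
  refine ⟨N, hNL, hNinf, ?_⟩
  rcases hcase with h | h
  · left
    intro A hA hAN
    set P := ↑A ∪ {x ∈ N | ∀ a ∈ A, a < x} with hP
    have hPN : P ⊆ N := by
      rintro x (hx | hx)
      · exact hAN hx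
      · exact hx.1
    have hPinf : P.Infinite := by
      apply Set.Infinite.mono (s := N \ Set.Iic (A.sup id)) ?_ (hNinf.diff (Set.finite_Iic _))
      rintro x ⟨hx1, hx2⟩
      simp only [Set.mem_Iic, not_le] at hx2
      exact Or.inr ⟨hx1, fun a ha => lt_of_le_of_lt (Finset.le_sup (f := id) ha) hx2⟩
    have hAseg : InitSegOf A P := by
      refine ⟨Set.subset_union_left, ?_⟩
      rintro x (hx | hx) a ha hxa
      · exact hx
      · exact absurd hxa (not_le.mpr (hx.2 a ha))
    obtain ⟨t, htseg, ht𝒜, htPfam⟩ := h P hPN hPinf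
    rcases comparable htseg hAseg with hc | hc
    · exact (hthin t ht𝒜 A hA hc) ▸ htPfam
    · exact (hthin A hA t ht𝒜 hc) ▸ htPfam
  · right
    intro A hA hAP hAN
    exact h A hAN ⟨hA, hAP⟩

lemma thin_colour {Γ : Type*} (s : Finset Γ) (𝒜 : Set (Finset ℕ))
    (hthin : ∀ A ∈ 𝒜, ∀ B ∈ 𝒜, IsInitSeg A B → A = B)
    (c : Finset ℕ → Γ) (hc : ∀ A ∈ 𝒜, c A ∈ s) (L : Set ℕ) (hL : L.Infinite) :
    ∃ N, N ⊆ L ∧ N.Infinite ∧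
      ∀ A ∈ 𝒜, ∀ B ∈ 𝒜, (↑A : Set ℕ) ⊆ N → (↑B : Set ℕ) ⊆ N → c A = c B := by
  classical
  induction s using Finset.induction generalizing 𝒜 L with
  | empty =>
    exact ⟨L, subset_rfl, hL, fun A hA => absurd (hc A hA) (by simp)⟩
  | @insert γ s hγ ih =>
    obtain ⟨N₁, hN₁L, hN₁inf, hcase⟩ := thin_pair 𝒜 hthin {A | c A = γ} L hL
    rcases hcase with h | h
    · exact ⟨N₁, hN₁L, hN₁inf, fun A hA B hB hAN hBN =>
        (h A hA hAN).trans (h B hB hBN).symm⟩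
    · set 𝒜' := {A ∈ 𝒜 | c A ≠ γ} with h𝒜'
      have hthin' : ∀ A ∈ 𝒜', ∀ B ∈ 𝒜', IsInitSeg A B → A = B :=
        fun A hA B hB => hthin A hA.1 B hB.1
      have hc' : ∀ A ∈ 𝒜', c A ∈ s := by
        intro A hA
        rcases Finset.mem_insert.mp (hc A hA.1) with h' | h'
        · exact absurd h' hA.2
        · exact h'
      obtain ⟨N, hNN₁, hNinf, hfin⟩ := ih 𝒜' hthin' hc' N₁ hN₁inf
      refine ⟨N, hNN₁.trans hN₁L, hNinf, ?_⟩
      intro A hA B hB hAN hBN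
      have hA' : A ∈ 𝒜' := ⟨hA, fun hcA => h A hA hcA (hAN.trans hNN₁)⟩
      have hB' : B ∈ 𝒜' := ⟨hB, fun hcB => h B hB hcB (hBN.trans hNN₁)⟩
      exact hfin A hA' B hB' hAN hBN

end DiagThin

namespace DiagThin

lemma block {Γ : Type*} (S : ℕ → Finset Γ) (𝒜 : Set (Finset ℕ))
    (hne : ∀ A ∈ 𝒜, A.Nonempty)
    (hthin : ∀ A ∈ 𝒜, ∀ B ∈ 𝒜, IsInitSeg A B → A = B)
    (c : Finset ℕ → Γ)
    (hc : ∀ A, (hA : A ∈ 𝒜) → c A ∈ S (A.min' (hne A hA)))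
    (m : ℕ) (L : Set ℕ) (hL : L.Infinite) :
    ∃ N, N ⊆ L ∧ N.Infinite ∧
      ∀ A ∈ 𝒜, ∀ B ∈ 𝒜, m ∈ A → (∀ a ∈ A, m ≤ a) → m ∈ B → (∀ a ∈ B, m ≤ a) →
        ↑(A.erase m) ⊆ N → ↑(B.erase m) ⊆ N → c A = c B := by
  classical
  set ℬ : Set (Finset ℕ) := {B | insert m B ∈ 𝒜 ∧ ∀ b ∈ B, m < b} with hℬ
  have hthinB : ∀ A ∈ ℬ, ∀ B ∈ ℬ, IsInitSeg A B → A = B := by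
    rintro A ⟨hA1, hA2⟩ B ⟨hB1, hB2⟩ ⟨hsub, hseg⟩
    have hkey : IsInitSeg (insert m A) (insert m B) := by
      refine ⟨Finset.insert_subset_insert m hsub, ?_⟩
      intro b hb a ha hba
      rcases Finset.mem_insert.mp hb with hbm | hb
      · subst hbm; exact Finset.mem_insert_self _ _
      · rcases Finset.mem_insert.mp ha with ham | ha
        · exact absurd hba (by rw [ham]; exact not_le.mpr (hB2 b hb))
        · exact Finset.mem_insert_of_mem (hseg b hb a ha hba)
    have heq := hthin _ hA1 _ hB1 hkey
    have hmA : m ∉ A := fun h => lt_irrefl m (hA2 m h)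
    have hmB : m ∉ B := fun h => lt_irrefl m (hB2 m h)
    calc A = (insert m A).erase m := (Finset.erase_insert hmA).symm
    _ = (insert m B).erase m := by rw [heq]
    _ = B := Finset.erase_insert hmB
  set c' : Finset ℕ → Γ := fun B => c (insert m B) with hc'def
  have hminB : ∀ (B : Finset ℕ), (∀ b ∈ B, m < b) → ∀ (h : (insert m B).Nonempty),
      (insert m B).min' h = m := by
    intro B hB h
    apply le_antisymm
    · exact Finset.min'_le _ m (Finset.mem_insert_self _ _)
    · exact Finset.le_min' _ _ _ fun a ha => by
        rcases Finset.mem_insert.mp ha with rfl | ha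
        · exact le_rfl
        · exact (hB a ha).le
  have hcB : ∀ B ∈ ℬ, c' B ∈ S m := by
    rintro B ⟨hB1, hB2⟩
    have := hc (insert m B) hB1
    rwa [hminB B hB2] at this
  obtain ⟨N, hNL, hNinf, hfin⟩ := thin_colour (S m) ℬ hthinB c' hcB L hL
  refine ⟨N, hNL, hNinf, ?_⟩
  intro A hA B hB hmA hminA hmB hminB' hAe hBe
  have hAmem : A.erase m ∈ ℬ := by
    constructor
    · rw [Finset.insert_erase hmA]; exact hA
    · intro b hb
      exact lt_of_le_of_ne (hminA b (Finset.mem_of_mem_erase hb))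
        (Ne.symm (Finset.ne_of_mem_erase hb))
  have hBmem : B.erase m ∈ ℬ := by
    constructor
    · rw [Finset.insert_erase hmB]; exact hB
    · intro b hb
      exact lt_of_le_of_ne (hminB' b (Finset.mem_of_mem_erase hb))
        (Ne.symm (Finset.ne_of_mem_erase hb))
  have := hfin (A.erase m) hAmem (B.erase m) hBmem hAe hBe
  simp only [hc'def, Finset.insert_erase hmA, Finset.insert_erase hmB] at this
  exact this

end DiagThin

open DiagThin in
/-- Diagonal Ramsey result for thin families: the colour set of a set `A` in the thin
family `𝒜` depends only on `min A`, each such colour set `S k` being finite.  One can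
pass to an infinite subset on which the colour of `A ∈ 𝒜` depends only on `min A`. -/
theorem diagonal_thin_ramsey {Γ : Type*} (S : ℕ → Finset Γ)
    (𝒜 : Set (Finset ℕ))
    (hne : ∀ A ∈ 𝒜, A.Nonempty)
    (hthin : ∀ A ∈ 𝒜, ∀ B ∈ 𝒜, IsInitSeg A B → A = B)
    (c : Finset ℕ → Γ)
    (hc : ∀ A, (hA : A ∈ 𝒜) → c A ∈ S (A.min' (hne A hA))) :
    ∀ L : Set ℕ, L.Infinite →
      ∃ M : Set ℕ, M ⊆ L ∧ M.Infinite ∧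
        ∀ A ∈ 𝒜, ∀ B ∈ 𝒜, (↑A : Set ℕ) ⊆ M → (↑B : Set ℕ) ⊆ M →
          A.min = B.min → c A = c B := by
  intro L hL
  classical
  set Blk : ℕ → Set ℕ → Prop := fun m N =>
    ∀ A ∈ 𝒜, ∀ B ∈ 𝒜, m ∈ A → (∀ a ∈ A, m ≤ a) → m ∈ B → (∀ a ∈ B, m ≤ a) →
      ↑(A.erase m) ⊆ N → ↑(B.erase m) ⊆ N → c A = c B with hBlk
  have step : ∀ M : Set ℕ, M.Infinite →
      ∃ M', M' ⊆ M ∧ M'.Infinite ∧ (∀ x ∈ M', sInf M < x) ∧ Blk (sInf M) M' := by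
    intro M hM
    have h1 : (M \ Set.Iic (sInf M)).Infinite := hM.diff (Set.finite_Iic _)
    obtain ⟨N, hN1, hN2, hN3⟩ := block S 𝒜 hne hthin c hc (sInf M) _ h1
    refine ⟨N, hN1.trans Set.diff_subset, hN2, ?_, hN3⟩
    intro x hx
    have := hN1 hx
    simp only [Set.mem_diff, Set.mem_Iic, not_le] at this
    exact this.2
  set R : {M : Set ℕ // M.Infinite ∧ M ⊆ L} → {M : Set ℕ // M.Infinite ∧ M ⊆ L} → Prop :=
    fun a b => b.1 ⊆ a.1 ∧ (∀ x ∈ b.1, sInf a.1 < x) ∧ Blk (sInf a.1) b.1 with hR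
  have hstep : ∀ a, ∃ b, R a b := by
    rintro ⟨M, hMinf, hML⟩
    obtain ⟨M', h1, h2, h3, h4⟩ := step M hMinf
    exact ⟨⟨M', h2, h1.trans hML⟩, h1, h3, h4⟩
  obtain ⟨f, hf0, hf⟩ := seq_rec (⟨L, hL, subset_rfl⟩ : {M : Set ℕ // M.Infinite ∧ M ⊆ L}) R hstep
  set n : ℕ → ℕ := fun k => sInf (f k).1 with hn
  have msub : ∀ k, (f (k + 1)).1 ⊆ (f k).1 := fun k => (hf k).1
  have mle : ∀ k j, k ≤ j → (f j).1 ⊆ (f k).1 := by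
    intro k j hkj
    induction j, hkj using Nat.le_induction with
    | base => exact subset_rfl
    | succ j hkj ih => exact (msub j).trans ih
  have nmem : ∀ k, n k ∈ (f k).1 := fun k => Nat.sInf_mem (f k).2.1.nonempty
  have nlt : ∀ k, n k < n (k + 1) := fun k => (hf k).2.1 _ (nmem (k + 1))
  have hmono : StrictMono n := strictMono_nat_of_lt_succ nlt
  refine ⟨Set.range n, ?_, Set.infinite_range_of_injective hmono.injective, ?_⟩
  · rintro x ⟨k, rfl⟩
    exact (f k).2.2 (nmem k)
  intro A hA B hB hAM hBM hminAB
  set m := A.min' (hne A hA) with hm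
  have hmB : B.min' (hne B hB) = m := by
    have h1 := hminAB
    rw [← Finset.coe_min' (hne A hA), ← Finset.coe_min' (hne B hB)] at h1
    exact_mod_cast h1.symm
  obtain ⟨k, hk⟩ : ∃ k, n k = m := hAM (A.min'_mem (hne A hA))
  have hAsub : ↑(A.erase m) ⊆ (f (k + 1)).1 := by
    intro x hx
    simp only [Finset.coe_erase, Set.mem_diff, Set.mem_singleton_iff] at hx
    obtain ⟨j, rfl⟩ := hAM hx.1
    have hlt : n k < n j := lt_of_le_of_ne (hk ▸ A.min'_le _ hx.1) (hk ▸ Ne.symm hx.2)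
    exact mle (k + 1) j (hmono.lt_iff_lt.mp hlt) (nmem j)
  have hBsub : ↑(B.erase m) ⊆ (f (k + 1)).1 := by
    intro x hx
    simp only [Finset.coe_erase, Set.mem_diff, Set.mem_singleton_iff] at hx
    obtain ⟨j, rfl⟩ := hBM hx.1
    have hlt : n k < n j := lt_of_le_of_ne (by rw [hk, ← hmB]; exact B.min'_le _ hx.1)
      (hk ▸ Ne.symm hx.2)
    exact mle (k + 1) j (hmono.lt_iff_lt.mp hlt) (nmem j)
  have hblk : Blk m ((f (k + 1)) : Set ℕ) := by rw [← hk]; exact (hf k).2.2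
  exact hblk A hA B hB (A.min'_mem (hne A hA)) (fun a ha => A.min'_le _ ha)
    (hmB ▸ B.min'_mem (hne B hB)) (fun a ha => hmB ▸ B.min'_le _ ha) hAsub hBsub
end

section
/- Let 𝒜 be a thin family of non-empty finite subsets of ℕ, and suppose 𝒜 is finitely coloured. Then for every infinite subset L of ℕ there exists an infinite subset M of L such that all elements of 𝒜 that are subsets of M receive the same colour. -/
/-- `A` is an initial segment of the (typically infinite) set `X`. -/
def InitSegOf (A : Finset ℕ) (X : Set ℕ) : Prop :=
  ↑A ⊆ X ∧ ∀ x ∈ X, ∀ a ∈ A, x ≤ a → x ∈ A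

/-- `X ∈ [s, N]`: `s` is an initial segment of `X` and the rest of `X` lies in `N`. -/
def ExtIn (s : Finset ℕ) (N X : Set ℕ) : Prop :=
  InitSegOf s X ∧ ∀ x ∈ X, x ∉ s → x ∈ N

def Accepts (F : Set (Finset ℕ)) (N : Set ℕ) (s : Finset ℕ) : Prop :=
  ∀ X : Set ℕ, X.Infinite → ExtIn s N X → ∃ B ∈ F, InitSegOf B X

def Rejects (F : Set (Finset ℕ)) (N : Set ℕ) (s : Finset ℕ) : Prop :=
  ∀ Y : Set ℕ, Y ⊆ N → Y.Infinite → ¬ Accepts F Y s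

lemma bdd_finite (s : Finset ℕ) : {x : ℕ | ∃ a ∈ s, x ≤ a}.Finite := by
  apply Set.Finite.subset (Set.finite_Iic (s.sup id))
  rintro x ⟨a, ha, hxa⟩
  exact hxa.trans (Finset.le_sup (f := id) ha)

lemma infinite_above {N : Set ℕ} (hN : N.Infinite) (s : Finset ℕ) :
    {x ∈ N | ∀ a ∈ s, a < x}.Infinite := by
  refine (hN.diff (bdd_finite s)).mono ?_
  rintro x ⟨hxN, hx⟩
  refine ⟨hxN, fun a ha => ?_⟩
  by_contra h
  exact hx ⟨a, ha, not_lt.mp h⟩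

lemma acc_mono {F N N' s} (h : N' ⊆ N) (hacc : Accepts F N s) : Accepts F N' s :=
  fun X hX ⟨hseg, hsub⟩ => hacc X hX ⟨hseg, fun x hx hxs => h (hsub x hx hxs)⟩

lemma rej_mono {F N N' s} (h : N' ⊆ N) (hrej : Rejects F N s) : Rejects F N' s :=
  fun Y hY => hrej Y (hY.trans h)

lemma acc_local {F N N' s} (h : ∀ x ∈ N, (∀ a ∈ s, a < x) → x ∈ N')
    (hacc : Accepts F N' s) : Accepts F N s := by
  rintro X hX ⟨hseg, hsub⟩
  refine hacc X hX ⟨hseg, fun x hx hxs => h x (hsub x hx hxs) fun a ha => ?_⟩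
  by_contra hle
  exact hxs (hseg.2 x hx a ha (not_lt.mp hle))

lemma rej_local {F N N' s} (h : ∀ x ∈ N, (∀ a ∈ s, a < x) → x ∈ N')
    (hrej : Rejects F N' s) : Rejects F N s := by
  intro Y hYN hY hacc
  refine hrej {x ∈ Y | ∀ a ∈ s, a < x} ?_ (infinite_above hY s) ?_
  · rintro x ⟨hxY, hx⟩
    exact h x (hYN hxY) hx
  · exact acc_mono (fun x hx => hx.1) hacc

lemma decide (F : Set (Finset ℕ)) (s : Finset ℕ) (N : Set ℕ) (hN : N.Infinite) :
    ∃ N', N' ⊆ N ∧ N'.Infinite ∧ (Accepts F N' s ∨ Rejects F N' s) := by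
  by_cases h : ∃ Y, Y ⊆ N ∧ Y.Infinite ∧ Accepts F Y s
  · obtain ⟨Y, h1, h2, h3⟩ := h
    exact ⟨Y, h1, h2, Or.inl h3⟩
  · exact ⟨N, subset_rfl, hN, Or.inr fun Y hY hYi ha => h ⟨Y, hY, hYi, ha⟩⟩

lemma step (F : Set (Finset ℕ)) (s : Finset ℕ) (N : Set ℕ) (hN : N.Infinite)
    (hrej : Rejects F N s) :
    ∃ N', N' ⊆ N ∧ N'.Infinite ∧ ∀ n ∈ N', Rejects F N' (insert n s) := by
  classical
  set N₀ : Set ℕ := {x ∈ N | ∀ a ∈ s, a < x} with hN₀def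
  have hN₀N : N₀ ⊆ N := fun x hx => hx.1
  have hN₀ : N₀.Infinite := infinite_above hN s
  have hrej₀ : Rejects F N₀ s := rej_mono hN₀N hrej
  have Hnext : ∀ Y : Set ℕ, Y.Infinite → ∃ Z, Z ⊆ Y ∧ Z.Infinite ∧ (∀ z ∈ Z, sInf Y < z) ∧
      (Accepts F Z (insert (sInf Y) s) ∨ Rejects F Z (insert (sInf Y) s)) := by
    intro Y hY
    have hYI : (Y ∩ Set.Ioi (sInf Y)).Infinite := by
      refine (hY.diff (Set.finite_Iic (sInf Y))).mono ?_
      rintro x ⟨h1, h2⟩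
      exact ⟨h1, by simpa using h2⟩
    obtain ⟨Z, hZsub, hZinf, hdec⟩ := decide F (insert (sInf Y) s) _ hYI
    exact ⟨Z, hZsub.trans Set.inter_subset_left, hZinf,
      fun z hz => (hZsub hz).2, hdec⟩
  choose nxt h1 h2 h3 h4 using Hnext
  let g : ℕ → {Y : Set ℕ // Y.Infinite} := fun i =>
    Nat.rec ⟨N₀, hN₀⟩ (fun _ p => ⟨nxt p.1 p.2, h2 p.1 p.2⟩) i
  set n : ℕ → ℕ := fun i => sInf (g i).1 with hndef
  have hg0 : (g 0).1 = N₀ := rfl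
  have hmem : ∀ i, n i ∈ (g i).1 := fun i => Nat.sInf_mem (g i).2.nonempty
  have hsub1 : ∀ i, (g (i+1)).1 ⊆ (g i).1 := fun i => h1 (g i).1 (g i).2
  have hlt : ∀ i, ∀ z ∈ (g (i+1)).1, n i < z := fun i => h3 (g i).1 (g i).2
  have hdec : ∀ i, Accepts F (g (i+1)).1 (insert (n i) s) ∨
      Rejects F (g (i+1)).1 (insert (n i) s) := fun i => h4 (g i).1 (g i).2
  have hchain : ∀ i j, i ≤ j → (g j).1 ⊆ (g i).1 := by
    intro i j hij
    induction j with
    | zero => simp_all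
    | succ k ih =>
      rcases Nat.lt_or_ge i (k+1) with h | h
      · exact (hsub1 k).trans (ih (Nat.lt_succ_iff.mp h))
      · have : i = k + 1 := le_antisymm hij h
        subst this; exact subset_rfl
  have hmono : StrictMono n := by
    apply strictMono_nat_of_lt_succ
    intro i
    exact hlt i _ (hmem (i+1))
  -- accepting indices form a finite set
  have hIfin : ¬ {i | Accepts F (g (i+1)).1 (insert (n i) s)}.Infinite := by
    intro hI
    set I := {i | Accepts F (g (i+1)).1 (insert (n i) s)} with hIdef
    have hAinf : (n '' I).Infinite := hI.image (hmono.injective.injOn)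
    refine hrej₀ (n '' I) ?_ hAinf ?_
    · rintro x ⟨i, _, rfl⟩
      exact hchain 0 i (Nat.zero_le i) (hmem i)
    · rintro X hX ⟨hseg, hXA⟩
      have hXs : (X \ ↑s).Infinite := hX.diff (Finset.finite_toSet s)
      set m := sInf (X \ ↑s) with hmdef
      have hm : m ∈ X \ ↑s := Nat.sInf_mem hXs.nonempty
      obtain ⟨i, hiI, hin⟩ : m ∈ n '' I := hXA m hm.1 (by simpa using hm.2)
      refine hiI X hX ⟨⟨?_, ?_⟩, ?_⟩
      · rw [Finset.coe_insert]
        exact Set.insert_subset (hin ▸ hm.1) hseg.1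
      · intro x hx a ha hxa
        rcases Finset.mem_insert.mp ha with rfl | ha'
        · by_cases hxs : x ∈ s
          · exact Finset.mem_insert_of_mem hxs
          · have hle : m ≤ x := Nat.sInf_le ⟨hx, by simpa using hxs⟩
            have : x = n i := le_antisymm (hxa) (hin ▸ hle)
            simp [this]
        · exact Finset.mem_insert_of_mem (hseg.2 x hx a ha' hxa)
      · intro x hx hxnotin
        have hxs : x ∉ s := fun h => hxnotin (Finset.mem_insert_of_mem h)
        have hxm : x ≠ n i := fun h => hxnotin (h ▸ Finset.mem_insert_self _ _)
        obtain ⟨j, hjI, rfl⟩ : x ∈ n '' I := hXA x hx hxs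
        have hle : m ≤ n j := Nat.sInf_le ⟨hx, by simpa using hxs⟩
        have hij : i < j := hmono.lt_iff_lt.mp (lt_of_le_of_ne (hin ▸ hle) (Ne.symm hxm))
        exact hchain (i+1) j hij (hmem j)
  have hIfin' : {i | Accepts F (g (i+1)).1 (insert (n i) s)}.Finite :=
    Set.not_infinite.mp hIfin
  set J := {i | Rejects F (g (i+1)).1 (insert (n i) s)} with hJdef
  have hJinf : J.Infinite := by
    refine (hIfin'.infinite_compl).mono ?_
    intro i hi
    exact (hdec i).resolve_left hi
  refine ⟨n '' J, ?_, hJinf.image hmono.injective.injOn, ?_⟩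
  · rintro x ⟨i, _, rfl⟩
    exact hN₀N (hchain 0 i (Nat.zero_le i) (hmem i))
  · rintro x ⟨i, hiJ, rfl⟩
    refine rej_local (N' := (g (i+1)).1) ?_ hiJ
    rintro y ⟨j, _, rfl⟩ hy
    have : n i < n j := hy (n i) (Finset.mem_insert_self _ _)
    exact hchain (i+1) j (hmono.lt_iff_lt.mp this) (hmem j)

lemma stepFinset (F : Set (Finset ℕ)) (S : Finset (Finset ℕ)) :
    ∀ N : Set ℕ, N.Infinite → (∀ s ∈ S, Rejects F N s) →
    ∃ N', N' ⊆ N ∧ N'.Infinite ∧ ∀ s ∈ S, ∀ n ∈ N', Rejects F N' (insert n s) := by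
  classical
  induction S using Finset.induction_on with
  | empty => exact fun N hN _ => ⟨N, subset_rfl, hN, by simp⟩
  | @insert t S htS ih =>
    intro N hN hrej
    obtain ⟨N₁, hs1, hi1, hst1⟩ := step F t N hN (hrej t (Finset.mem_insert_self _ _))
    obtain ⟨N₂, hs2, hi2, hst2⟩ := ih N₁ hi1
      (fun s hs => rej_mono hs1 (hrej s (Finset.mem_insert_of_mem hs)))
    refine ⟨N₂, hs2.trans hs1, hi2, ?_⟩
    intro s hs m hm
    rcases Finset.mem_insert.mp hs with rfl | hs'
    · exact rej_mono hs2 (hst1 m (hs2 hm))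
    · exact hst2 s hs' m hm

lemma fusion (F : Set (Finset ℕ)) (L : Set ℕ) (hL : L.Infinite) (hrej : Rejects F L ∅) :
    ∃ M, M ⊆ L ∧ M.Infinite ∧ ∀ s : Finset ℕ, ↑s ⊆ M → Rejects F M s := by
  classical
  set Good : Finset ℕ × Set ℕ → Prop := fun p =>
    p.2.Infinite ∧ p.2 ⊆ L ∧ (∀ t ∈ p.1, ∀ x ∈ p.2, t < x) ∧
      ∀ s ∈ p.1.powerset, Rejects F p.2 s with hGood
  have Hstep : ∀ p : {p : Finset ℕ × Set ℕ // Good p}, ∃ q : {p : Finset ℕ × Set ℕ // Good p},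
      ∃ m, m ∈ p.1.2 ∧ q.1.1 = insert m p.1.1 ∧ q.1.2 ⊆ p.1.2 ∧ ∀ x ∈ q.1.2, m < x := by
    rintro ⟨⟨T, N⟩, hinf, hsubL, hord, hrejs⟩
    obtain ⟨N', hsub, hinf', hstep⟩ := stepFinset F T.powerset N hinf
      (fun s hs => hrejs s hs)
    set m := sInf N' with hm
    have hmN' : m ∈ N' := Nat.sInf_mem hinf'.nonempty
    have hInf2 : (N' ∩ Set.Ioi m).Infinite := by
      refine (hinf'.diff (Set.finite_Iic m)).mono ?_
      rintro x ⟨hx1, hx2⟩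
      exact ⟨hx1, by simpa using hx2⟩
    refine ⟨⟨(insert m T, N' ∩ Set.Ioi m), hInf2, (Set.inter_subset_left.trans hsub).trans hsubL,
      ?_, ?_⟩, m, hsub hmN', rfl, Set.inter_subset_left.trans hsub, fun x hx => hx.2⟩
    · intro t ht x hx
      rcases Finset.mem_insert.mp ht with rfl | ht'
      · exact hx.2
      · exact hord t ht' x (hsub hx.1)
    · intro u hu
      rw [Finset.mem_powerset] at hu
      by_cases hmu : m ∈ u
      · have h1 : u.erase m ⊆ T := by
          rw [← Finset.subset_insert_iff]; exact hu
        have := hstep (u.erase m) (Finset.mem_powerset.mpr h1) m hmN'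
        rw [Finset.insert_erase hmu] at this
        exact rej_mono Set.inter_subset_left this
      · have h1 : u ⊆ T := fun x hx => (Finset.mem_insert.mp (hu hx)).resolve_left
          (fun h => hmu (h ▸ hx))
        exact rej_mono (Set.inter_subset_left.trans hsub)
          (hrejs u (Finset.mem_powerset.mpr h1))
  choose f m hm1 hm2 hm3 hm4 using Hstep
  have good0 : Good (∅, L) := by
    refine ⟨hL, subset_rfl, by simp, ?_⟩
    intro s hs
    rw [Finset.mem_powerset, Finset.subset_empty] at hs
    subst hs; exact hrej
  let st : ℕ → {p : Finset ℕ × Set ℕ // Good p} := fun i =>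
    Nat.rec ⟨(∅, L), good0⟩ (fun _ p => f p) i
  set e : ℕ → ℕ := fun i => m (st i) with hedef
  have hT0 : (st 0).1.1 = ∅ := rfl
  have hM0 : (st 0).1.2 = L := rfl
  have hein : ∀ i, e i ∈ (st i).1.2 := fun i => hm1 (st i)
  have hTsucc : ∀ i, (st (i+1)).1.1 = insert (e i) (st i).1.1 := fun i => hm2 (st i)
  have hMsub : ∀ i, (st (i+1)).1.2 ⊆ (st i).1.2 := fun i => hm3 (st i)
  have hegt : ∀ i, ∀ x ∈ (st (i+1)).1.2, e i < x := fun i => hm4 (st i)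
  have hchain : ∀ i j, i ≤ j → (st j).1.2 ⊆ (st i).1.2 := by
    intro i j
    induction j with
    | zero =>
      intro hij
      obtain rfl : i = 0 := Nat.le_zero.mp hij
      exact subset_rfl
    | succ k ih =>
      intro hij
      rcases Nat.lt_or_ge i (k+1) with h | h
      · exact (hMsub k).trans (ih (Nat.lt_succ_iff.mp h))
      · obtain rfl : i = k + 1 := le_antisymm hij h
        exact subset_rfl
  have hmono : StrictMono e := by
    apply strictMono_nat_of_lt_succ
    intro i
    exact hegt i _ (hein (i+1))
  have hTmem : ∀ j i, j < i → e j ∈ (st i).1.1 := by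
    intro j i hji
    induction i with
    | zero => omega
    | succ k ih =>
      rw [hTsucc k]
      rcases Nat.lt_or_ge j k with h | h
      · exact Finset.mem_insert_of_mem (ih h)
      · have : j = k := by omega
        subst this; exact Finset.mem_insert_self _ _
  have hMsubL : ∀ i, (st i).1.2 ⊆ L := fun i => hchain 0 i (Nat.zero_le i)
  refine ⟨Set.range e, ?_, Set.infinite_range_of_injective hmono.injective, ?_⟩
  · rintro x ⟨i, rfl⟩
    exact hMsubL i (hein i)
  · intro s hs
    rcases s.eq_empty_or_nonempty with rfl | hsne
    · refine rej_mono ?_ hrej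
      rintro x ⟨i, rfl⟩
      exact hMsubL i (hein i)
    · obtain ⟨i, hi⟩ : ∃ i, e i = s.max' hsne := hs (s.max'_mem hsne)
      have hsT : s ⊆ (st (i+1)).1.1 := by
        intro x hx
        obtain ⟨j, rfl⟩ : ∃ j, e j = x := hs hx
        have hle : e j ≤ e i := hi ▸ s.le_max' _ hx
        exact hTmem j (i+1) (by have := hmono.le_iff_le.mp hle; omega)
      have hrejS : Rejects F (st (i+1)).1.2 s :=
        (st (i+1)).2.2.2.2 s (Finset.mem_powerset.mpr hsT)
      refine rej_local (N' := (st (i+1)).1.2) ?_ hrejS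
      rintro x ⟨j, rfl⟩ hgt
      have : e i < e j := hgt (e i) (hi ▸ s.max'_mem hsne)
      exact hchain (i+1) j (hmono.lt_iff_lt.mp this) (hein j)

lemma galvin (F : Set (Finset ℕ)) (L : Set ℕ) (hL : L.Infinite) :
    ∃ N, N ⊆ L ∧ N.Infinite ∧
      ((∀ X : Set ℕ, X ⊆ N → X.Infinite → ∃ B ∈ F, InitSegOf B X) ∨
       (∀ A ∈ F, ¬ (↑A : Set ℕ) ⊆ N)) := by
  by_cases h : ∃ Y, Y ⊆ L ∧ Y.Infinite ∧ Accepts F Y ∅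
  · obtain ⟨Y, hYL, hYinf, hacc⟩ := h
    refine ⟨Y, hYL, hYinf, Or.inl ?_⟩
    intro X hXY hX
    refine hacc X hX ⟨⟨by simp, by simp⟩, fun x hx _ => hXY hx⟩
  · have hrej : Rejects F L ∅ := fun Y hY hYi ha => h ⟨Y, hY, hYi, ha⟩
    obtain ⟨M, hML, hMinf, hMrej⟩ := fusion F L hL hrej
    refine ⟨M, hML, hMinf, Or.inr ?_⟩
    intro A hA hAM
    exact hMrej A hAM M subset_rfl hMinf (fun X hX hext => ⟨A, hA, hext.1⟩)

lemma initSegOf_comparable {A B : Finset ℕ} {X : Set ℕ}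
    (hA : InitSegOf A X) (hB : InitSegOf B X) : IsInitSeg A B ∨ IsInitSeg B A := by
  by_cases hAB : A ⊆ B
  · exact Or.inl ⟨hAB, fun b hb a ha hba => hA.2 b (hB.1 hb) a ha hba⟩
  · have hBA : B ⊆ A := by
      obtain ⟨a, ha, haB⟩ := Finset.not_subset.mp hAB
      intro b hb
      by_contra hbA
      rcases le_total b a with h | h
      · exact hbA (hA.2 b (hB.1 hb) a ha h)
      · exact haB (hB.2 a (hA.1 ha) b hb h)
    exact Or.inr ⟨hBA, fun a ha b hb hab => hB.2 a (hA.1 ha) b hb hab⟩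

lemma key {Γ : Type*} [DecidableEq Γ]
    (𝒜 : Set (Finset ℕ))
    (hthin : ∀ A ∈ 𝒜, ∀ B ∈ 𝒜, IsInitSeg A B → A = B)
    (c : Finset ℕ → Γ) (S : Finset Γ) :
    ∀ L : Set ℕ, L.Infinite → (∀ A ∈ 𝒜, (↑A : Set ℕ) ⊆ L → c A ∈ S) →
      ∃ M : Set ℕ, M ⊆ L ∧ M.Infinite ∧
        ∀ A ∈ 𝒜, ∀ B ∈ 𝒜, (↑A : Set ℕ) ⊆ M → (↑B : Set ℕ) ⊆ M → c A = c B := by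
  induction S using Finset.induction_on with
  | empty =>
    intro L hL hcol
    exact ⟨L, subset_rfl, hL, fun A hA B hB hAM _ => absurd (hcol A hA hAM) (by simp)⟩
  | @insert γ S hγS ih =>
    intro L hL hcol
    obtain ⟨N, hNL, hNinf, hcase⟩ := galvin {A | A ∈ 𝒜 ∧ c A = γ} L hL
    rcases hcase with hacc | hrej
    · refine ⟨N, hNL, hNinf, ?_⟩
      have hmonoc : ∀ A ∈ 𝒜, (↑A : Set ℕ) ⊆ N → c A = γ := by
        intro A hA hAN
        set X : Set ℕ := ↑A ∪ {x ∈ N | ∀ a ∈ A, a < x} with hXdef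
        have hXN : X ⊆ N := by
          rintro x (hx | hx)
          · exact hAN hx
          · exact hx.1
        have hXinf : X.Infinite := (infinite_above hNinf A).mono Set.subset_union_right
        obtain ⟨B, hBF, hBX⟩ := hacc X hXN hXinf
        have hAX : InitSegOf A X := by
          refine ⟨Set.subset_union_left, ?_⟩
          rintro x (hx | hx) a ha hxa
          · exact hx
          · exact absurd (hx.2 a ha) (not_lt.mpr hxa)
        have : A = B := by
          rcases initSegOf_comparable hAX hBX with h | h
          · exact hthin A hA B hBF.1 h
          · exact (hthin B hBF.1 A hA h).symm
        rw [this]; exact hBF.2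
      intro A hA B hB hAM hBM
      rw [hmonoc A hA hAM, hmonoc B hB hBM]
    · have hcol' : ∀ A ∈ 𝒜, (↑A : Set ℕ) ⊆ N → c A ∈ S := by
        intro A hA hAN
        have h1 : c A ∈ insert γ S := hcol A hA (hAN.trans hNL)
        have h2 : c A ≠ γ := fun h => hrej A ⟨hA, h⟩ hAN
        exact (Finset.mem_insert.mp h1).resolve_left h2
      obtain ⟨M, hMN, hMinf, hmono⟩ := ih N hNinf hcol'
      exact ⟨M, hMN.trans hNL, hMinf, hmono⟩

/-- Nash-Williams' theorem for thin families: if a thin family of non-empty finite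
subsets of ℕ is finitely coloured, then every infinite subset of ℕ has an infinite
subset on which the family is monochromatic. -/
theorem nash_williams_thin {Γ : Type*} [Finite Γ]
    (𝒜 : Set (Finset ℕ))
    (hne : ∀ A ∈ 𝒜, A.Nonempty)
    (hthin : ∀ A ∈ 𝒜, ∀ B ∈ 𝒜, IsInitSeg A B → A = B)
    (c : Finset ℕ → Γ) :
    ∀ L : Set ℕ, L.Infinite →
      ∃ M : Set ℕ, M ⊆ L ∧ M.Infinite ∧
        ∀ A ∈ 𝒜, ∀ B ∈ 𝒜, (↑A : Set ℕ) ⊆ M → (↑B : Set ℕ) ⊆ M → c A = c B := by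
  classical
  intro L hL
  have : Fintype Γ := Fintype.ofFinite Γ
  exact key 𝒜 hthin c Finset.univ L hL (fun A _ _ => Finset.mem_univ _)
end

section
/- If sup_{δ > 0} K(δ) < ∞ (where K(δ) is the best uniform δ-near-unconditionality constant achievable by passing to subsequences of normalized weakly null sequences), then there exists a constant C such that every normalized weakly null sequence has a quasi-greedy subsequence with constant C. -/
open Filter

/-- Weakly null sequence. -/
def IsWeaklyNull {X : Type*} [NormedAddCommGroup X] [NormedSpace ℝ X] (x : ℕ → X) : Prop :=
  ∀ f : X →L[ℝ] ℝ, Tendsto (fun i => f (x i)) atTop (nhds 0)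

/-- Basic sequence with basis constant at most `C`. -/
def IsBasicWith {X : Type*} [NormedAddCommGroup X] [NormedSpace ℝ X] (C : ℝ) (y : ℕ → X) : Prop :=
  ∀ a : ℕ →₀ ℝ, ∀ n : ℕ,
    ‖∑ i ∈ a.support.filter (· < n), a i • y i‖ ≤ C * ‖∑ i ∈ a.support, a i • y i‖

/-- `δ`-near-unconditional with constant `C`. -/
def NearUncondWith {X : Type*} [NormedAddCommGroup X] [NormedSpace ℝ X]
    (δ C : ℝ) (y : ℕ → X) : Prop :=
  IsBasicWith C y ∧
    ∀ a : ℕ →₀ ℝ, (∀ i, |a i| ≤ 1) → ∀ E : Finset ℕ, (∀ i ∈ E, δ ≤ |a i|) →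
      ‖∑ i ∈ E, a i • y i‖ ≤ C * ‖∑ i ∈ a.support, a i • y i‖

/-- Quasi-greedy with constant `C`: `y` is a basic sequence with constant `C` and for all
`δ ≥ 0` and finitely supported `a`, projecting onto `E = {i : |aᵢ| ≥ δ}` costs at most a
factor `C`.  The set `E` is characterized by `i ∈ E ↔ aᵢ ≠ 0 ∧ δ ≤ |aᵢ|`. -/
def QuasiGreedyWith {X : Type*} [NormedAddCommGroup X] [NormedSpace ℝ X]
    (C : ℝ) (y : ℕ → X) : Prop :=
  IsBasicWith C y ∧
    ∀ a : ℕ →₀ ℝ, ∀ δ : ℝ, 0 ≤ δ → ∀ E : Finset ℕ,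
      (∀ i, i ∈ E ↔ (a i ≠ 0 ∧ δ ≤ |a i|)) →
      ‖∑ i ∈ E, a i • y i‖ ≤ C * ‖∑ i ∈ a.support, a i • y i‖

/-!
With `δₙ = 1 / (2K(n + 1))`, a diagonal argument produces a subsequence `z` whose tail
`(z (m + i))ᵢ` is `δₘ`-near-unconditional with constant `K` for every `m`. Given coefficients `a`
with `F = ∑ aᵢ zᵢ` and a threshold `δ > 0`, the basis constant bounds every `|aᵢ|` by `2K‖F‖`.
Cut at `m = ⌊‖F‖ / δ⌋`: beyond `m`, the coefficients of size at least `δ` are at least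
`δₘ · 2K‖F‖`, so near-unconditionality of the tail bounds their sum by `K(1 + K)‖F‖`; before `m`,
the coefficients dropped by the threshold are at most `m` in number and each below `δ`, so they
cost at most `mδ ≤ ‖F‖` on top of the partial sum. Altogether the constant is `(1 + K)²`.
-/

theorem StrictMono.exists_strictMono_comp_eq {α β γ : Type*} [Preorder α] [LinearOrder γ]
    [Preorder β] {φ : α → β} {ψ : γ → β} (hφ : StrictMono φ) (hψ : StrictMono ψ)
    (hrange : ∀ i, φ i ∈ Set.range ψ) : ∃ ρ : α → γ, StrictMono ρ ∧ φ = ψ ∘ ρ := by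
  choose ρ hρ using hrange
  refine ⟨ρ, fun i j hij => hψ.lt_iff_lt.mp ?_, funext fun i => (hρ i).symm⟩
  rw [hρ i, hρ j]
  exact hφ hij

theorem exists_strictMono_forall_tail {P : ℕ → (ℕ → ℕ) → Prop}
    (hP : ∀ n (ψ : ℕ → ℕ), StrictMono ψ → ∃ θ : ℕ → ℕ, StrictMono θ ∧ P n (ψ ∘ θ))
    (hcomp : ∀ n (ψ θ : ℕ → ℕ), P n ψ → StrictMono θ → P n (ψ ∘ θ)) :
    ∃ φ : ℕ → ℕ, StrictMono φ ∧ ∀ m, P m (fun i => φ (m + i)) := by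
  choose! θ hθ using hP
  -- A nested chain of subsequences with `S 0 = id`, where `S (n + 1)` satisfies `P n`.
  let S : ℕ → ℕ → ℕ := fun n => Nat.rec id (fun k ψ => ψ ∘ θ k ψ) n
  have hS : ∀ n, StrictMono (S n) := by
    intro n
    induction n with
    | zero => exact strictMono_id
    | succ n ih => exact ih.comp (hθ n _ ih).1
  have hrange : ∀ m k, Set.range (S (m + k)) ⊆ Set.range (S m) := by
    intro m k
    induction k with
    | zero => rfl
    | succ k ih => exact (Set.range_comp_subset_range _ (S (m + k))).trans ih
  let φ : ℕ → ℕ := fun n => S (n + 1) n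
  have hφ : StrictMono φ := strictMono_nat_of_lt_succ fun n =>
    hS (n + 1) ((Nat.lt_succ_self n).trans_le ((hθ (n + 1) _ (hS (n + 1))).1.le_apply))
  refine ⟨φ, hφ, fun m => ?_⟩
  obtain ⟨ρ, hρ, hφρ⟩ := StrictMono.exists_strictMono_comp_eq (ψ := S (m + 1))
    (fun i j hij => hφ (Nat.add_lt_add_left hij m))
    (hS (m + 1)) fun i => hrange (m + 1) i (by rw [Nat.add_right_comm]; exact ⟨m + i, rfl⟩)
  rw [hφρ]
  exact hcomp m _ ρ (hθ m _ (hS m)).2 hρ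

theorem Finset.sum_preimage_add_left {M : Type*} [AddCommMonoid M] (s : Finset ℕ) (m : ℕ)
    (f : ℕ → M) :
    ∑ i ∈ s.preimage (m + ·) (add_right_injective m).injOn, f (m + i)
      = ∑ j ∈ s with m ≤ j, f j := by
  rw [Finset.sum_filter, ← Finset.sum_preimage (m + ·) s (add_right_injective m).injOn _
    fun j _ hj => if_neg fun hmj => hj ⟨j - m, by simp only; omega⟩]
  simp

section

variable {X : Type*} [NormedAddCommGroup X] [NormedSpace ℝ X]

theorem IsWeaklyNull.comp_strictMono {x : ℕ → X} (hx : IsWeaklyNull x) {τ : ℕ → ℕ}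
    (hτ : StrictMono τ) : IsWeaklyNull (x ∘ τ) := fun f =>
  (hx f).comp hτ.tendsto_atTop

theorem Finset.sum_map_embDomain_smul {α β : Type*} (e : α ↪ β) (a : α →₀ ℝ) (y : β → X)
    (s : Finset α) :
    ∑ i ∈ s.map e, Finsupp.embDomain e a i • y i = ∑ i ∈ s, a i • y (e i) := by
  simp only [Finset.sum_map, Finsupp.embDomain_apply_self]

namespace IsBasicWith

variable {C : ℝ} {y : ℕ → X}

theorem mono {C' : ℝ} (h : IsBasicWith C y) (hC : C ≤ C') : IsBasicWith C' y := fun a n =>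
  (h a n).trans (mul_le_mul_of_nonneg_right hC (norm_nonneg _))

theorem comp_strictMono (h : IsBasicWith C y) {τ : ℕ → ℕ} (hτ : StrictMono τ) :
    IsBasicWith C (y ∘ τ) := by
  intro a n
  let e : ℕ ↪ ℕ := ⟨τ, hτ.injective⟩
  have hfilter : {i ∈ a.support.map e | i < τ n} = {i ∈ a.support | i < n}.map e := by
    rw [Finset.filter_map]
    exact congrArg _ (Finset.filter_congr fun i _ => hτ.lt_iff_lt)
  have := h (Finsupp.embDomain e a) (τ n)
  rwa [Finsupp.support_embDomain, hfilter, Finset.sum_map_embDomain_smul,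
    Finset.sum_map_embDomain_smul] at this

theorem norm_smul_le (h : IsBasicWith C y) (a : ℕ →₀ ℝ) (i : ℕ) :
    ‖a i • y i‖ ≤ 2 * C * ‖∑ j ∈ a.support, a j • y j‖ := by
  have hdiff : ∑ j ∈ a.support with j < i + 1, a j • y j - ∑ j ∈ a.support with j < i, a j • y j
      = a i • y i := by
    rw [Finset.sum_filter, Finset.sum_filter, ← Finset.sum_sub_distrib]
    trans ∑ j ∈ a.support, if j = i then a j • y j else 0
    · refine Finset.sum_congr rfl fun j _ => ?_
      split_ifs <;> first | (exfalso; omega) | simp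
    · rw [Finset.sum_ite_eq']
      split_ifs with hi
      · rfl
      · simp [Finsupp.notMem_support_iff.mp hi]
  rw [← hdiff]
  calc _ ≤ _ := norm_sub_le _ _
    _ ≤ C * ‖∑ j ∈ a.support, a j • y j‖ + C * ‖∑ j ∈ a.support, a j • y j‖ :=
      add_le_add (h a (i + 1)) (h a i)
    _ = _ := by ring

theorem norm_tail_sum_le (h : IsBasicWith C y) (a : ℕ →₀ ℝ) (m : ℕ) :
    ‖∑ i ∈ a.support with m ≤ i, a i • y i‖ ≤ (1 + C) * ‖∑ i ∈ a.support, a i • y i‖ := by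
  have hsplit := Finset.sum_filter_add_sum_filter_not a.support (· < m) fun i => a i • y i
  simp only [not_lt] at hsplit
  rw [← eq_sub_iff_add_eq'] at hsplit
  rw [hsplit, add_mul, one_mul]
  linarith [norm_sub_le (∑ i ∈ a.support, a i • y i) (∑ i ∈ a.support with i < m, a i • y i), h a m]

theorem norm_head_sum_le (h : IsBasicWith C y) (hy : ∀ i, ‖y i‖ ≤ 1) (a : ℕ →₀ ℝ)
    {δ : ℝ} (hδ : 0 ≤ δ) (m : ℕ) :
    ‖∑ i ∈ a.support with δ ≤ |a i| ∧ i < m, a i • y i‖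
      ≤ C * ‖∑ i ∈ a.support, a i • y i‖ + m * δ := by
  have hsplit := Finset.sum_filter_add_sum_filter_not {i ∈ a.support | i < m}
    (fun i => δ ≤ |a i|) fun i => a i • y i
  simp only [Finset.filter_filter, and_comm (a := _ < m)] at hsplit
  rw [← eq_sub_iff_add_eq] at hsplit
  set small := {i ∈ a.support | ¬ δ ≤ |a i| ∧ i < m}
  have hsmall : ‖∑ i ∈ small, a i • y i‖ ≤ m * δ := by
    have hcard : small.card ≤ m := by
      simpa using Finset.card_le_card fun i hi => Finset.mem_range.mpr (Finset.mem_filter.mp hi).2.2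
    calc _ ≤ ∑ _i ∈ small, δ := by
          refine norm_sum_le_of_le _ fun i hi => ?_
          rw [norm_smul, Real.norm_eq_abs]
          have := (Finset.mem_filter.mp hi).2.1
          nlinarith [hy i, abs_nonneg (a i), norm_nonneg (y i)]
      _ ≤ m * δ := by
          rw [Finset.sum_const, nsmul_eq_mul]
          exact mul_le_mul_of_nonneg_right (by exact_mod_cast hcard) hδ
  rw [hsplit]
  linarith [norm_sub_le (∑ i ∈ a.support with i < m, a i • y i) (∑ i ∈ small, a i • y i), h a m]

end IsBasicWith

namespace NearUncondWith

variable {δ C : ℝ} {y : ℕ → X}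

theorem mono {C' : ℝ} (h : NearUncondWith δ C y) (hC : C ≤ C') : NearUncondWith δ C' y :=
  ⟨h.1.mono hC, fun a ha E hE =>
    (h.2 a ha E hE).trans (mul_le_mul_of_nonneg_right hC (norm_nonneg _))⟩

theorem comp_strictMono (h : NearUncondWith δ C y) {τ : ℕ → ℕ} (hτ : StrictMono τ) :
    NearUncondWith δ C (y ∘ τ) := by
  refine ⟨h.1.comp_strictMono hτ, fun a ha E hE => ?_⟩
  let e : ℕ ↪ ℕ := ⟨τ, hτ.injective⟩
  have ha' : ∀ i, |Finsupp.embDomain e a i| ≤ 1 := by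
    intro i
    by_cases hi : i ∈ Set.range e
    · obtain ⟨j, rfl⟩ := hi
      rw [Finsupp.embDomain_apply_self]
      exact ha j
    · simp [Finsupp.embDomain_of_notMem_range _ _ _ hi]
  have hE' : ∀ i ∈ E.map e, δ ≤ |Finsupp.embDomain e a i| := by
    simpa [Finsupp.embDomain_apply_self] using hE
  have := h.2 (Finsupp.embDomain e a) ha' (E.map e) hE'
  rwa [Finsupp.support_embDomain, Finset.sum_map_embDomain_smul,
    Finset.sum_map_embDomain_smul] at this

theorem norm_sum_le_of_abs_le (h : NearUncondWith δ C y) {a : ℕ →₀ ℝ} {M : ℝ} (hM : 0 < M)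
    (ha : ∀ i, |a i| ≤ M) {E : Finset ℕ} (hE : ∀ i ∈ E, δ * M ≤ |a i|) :
    ‖∑ i ∈ E, a i • y i‖ ≤ C * ‖∑ i ∈ a.support, a i • y i‖ := by
  have hscaled := h.2 (M⁻¹ • a)
    (fun i => by simpa [abs_mul, abs_of_pos hM, inv_mul_le_iff₀ hM] using ha i) E
    (fun i hi => by simpa [abs_mul, abs_of_pos hM, le_inv_mul_iff₀ hM, mul_comm] using hE i hi)
  simp only [Finsupp.support_smul_eq (inv_ne_zero hM.ne'), Finsupp.smul_apply, smul_eq_mul,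
    mul_smul, ← Finset.smul_sum, norm_smul, Real.norm_eq_abs, abs_inv, abs_of_pos hM] at hscaled
  rw [mul_left_comm] at hscaled
  exact le_of_mul_le_mul_left hscaled (inv_pos.mpr hM)

theorem norm_tail_sum_le_of_shift {m : ℕ} (h : NearUncondWith δ C fun i => y (m + i))
    {a : ℕ →₀ ℝ} {M : ℝ} (hM : 0 < M) (ha : ∀ i, |a i| ≤ M) {η : ℝ} (hη : δ * M ≤ η) :
    ‖∑ i ∈ a.support with η ≤ |a i| ∧ m ≤ i, a i • y i‖
      ≤ C * ‖∑ i ∈ a.support with m ≤ i, a i • y i‖ := by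
  let b : ℕ →₀ ℝ := Finsupp.comapDomain (m + ·) a (add_right_injective m).injOn
  have hb : ∀ i, b i = a (m + i) := fun i => rfl
  have key := h.norm_sum_le_of_abs_le (a := b) hM (fun i => ha _)
    (E := {j ∈ a.support | η ≤ |a j|}.preimage (m + ·) (add_right_injective m).injOn)
    fun i hi => hη.trans <| by
      simpa [hb] using (Finset.mem_filter.mp (Finset.mem_preimage.mp hi)).2
  simp only [hb] at key
  rwa [Finset.sum_preimage_add_left (f := fun j => a j • y j), Finset.filter_filter,
    show b.support = a.support.preimage (m + ·) (add_right_injective m).injOn from rfl,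
    Finset.sum_preimage_add_left (f := fun j => a j • y j)] at key

end NearUncondWith

theorem quasiGreedyWith_of_nearUncondWith_tails {K : ℝ} (hK : 0 < K) {z : ℕ → X}
    (hz : ∀ i, ‖z i‖ = 1)
    (htail : ∀ m : ℕ, NearUncondWith (2 * K * ((m : ℝ) + 1))⁻¹ K fun i => z (m + i)) :
    QuasiGreedyWith ((1 + K) ^ 2) z := by
  have hb : IsBasicWith K z := by simpa using (htail 0).1
  refine ⟨hb.mono (by nlinarith), fun a δ hδ E hE => ?_⟩
  obtain rfl : E = {i ∈ a.support | δ ≤ |a i|} := by ext i; simp [hE]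
  set F := ∑ i ∈ a.support, a i • z i
  have hcoeff : ∀ i, |a i| ≤ 2 * K * ‖F‖ := fun i => by
    simpa [norm_smul, hz] using hb.norm_smul_le a i
  rcases hδ.eq_or_lt with rfl | hδ
  · rw [Finset.filter_true_of_mem fun i _ => abs_nonneg (a i)]
    exact le_mul_of_one_le_left (norm_nonneg F) (by nlinarith)
  rcases (norm_nonneg F).eq_or_lt with hF | hF
  · obtain rfl : a = 0 := Finsupp.ext fun i => abs_nonpos_iff.mp (by simpa [← hF] using hcoeff i)
    simp [← hF]
  set m := ⌊‖F‖ / δ⌋₊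
  have hmδ : m * δ ≤ ‖F‖ := (le_div_iff₀ hδ).mp (Nat.floor_le (by positivity))
  have hlevel : (2 * K * ((m : ℝ) + 1))⁻¹ * (2 * K * ‖F‖) ≤ δ := by
    have := Nat.lt_floor_add_one (‖F‖ / δ)
    rw [div_lt_iff₀ hδ] at this
    field_simp
    linarith
  have hhead := hb.norm_head_sum_le (fun i => (hz i).le) a hδ.le m
  have htail_large := (htail m).norm_tail_sum_le_of_shift (by positivity) hcoeff hlevel
  have htail_sum := hb.norm_tail_sum_le a m
  rw [← Finset.sum_filter_add_sum_filter_not _ (· < m), Finset.filter_filter, Finset.filter_filter]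
  simp only [not_lt]
  calc _ ≤ _ := norm_add_le _ _
    _ ≤ (K * ‖F‖ + m * δ) + K * ((1 + K) * ‖F‖) := by
        gcongr
        exact htail_large.trans (by gcongr)
    _ ≤ _ := by nlinarith

end

/-- If there is a uniform near-unconditionality constant (i.e. `sup_{δ>0} K(δ) < ∞`),
then there is a constant `C` such that every normalized weakly null sequence has a
quasi-greedy subsequence with constant `C`. -/
theorem uniform_near_uncond_implies_quasi_greedy
    (h : ∃ K : ℝ, ∀ δ : ℝ, 0 < δ → δ ≤ 1 →
      ∀ (X : Type) [NormedAddCommGroup X] [NormedSpace ℝ X] [CompleteSpace X]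
        (x : ℕ → X), (∀ i, ‖x i‖ = 1) → IsWeaklyNull x →
        ∃ φ : ℕ → ℕ, StrictMono φ ∧ NearUncondWith δ K (x ∘ φ)) :
    ∃ C : ℝ, ∀ (X : Type) [NormedAddCommGroup X] [NormedSpace ℝ X] [CompleteSpace X]
      (x : ℕ → X), (∀ i, ‖x i‖ = 1) → IsWeaklyNull x →
      ∃ φ : ℕ → ℕ, StrictMono φ ∧ QuasiGreedyWith C (x ∘ φ) := by
  obtain ⟨K, hK⟩ := h
  -- Enlarging `K` to at least `1` keeps the levels `(2K'(n + 1))⁻¹` in `(0, 1]`.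
  set K' := max K 1
  have hK' : 1 ≤ K' := le_max_right K 1
  refine ⟨(1 + K') ^ 2, fun X _ _ _ x hx hxw => ?_⟩
  have hlevel : ∀ n : ℕ, 0 < (2 * K' * ((n : ℝ) + 1))⁻¹ ∧ (2 * K' * ((n : ℝ) + 1))⁻¹ ≤ 1 :=
    fun n => ⟨by positivity, inv_le_one_of_one_le₀ (by nlinarith [n.cast_nonneg (α := ℝ)])⟩
  obtain ⟨φ, hφ, htail⟩ := exists_strictMono_forall_tail
    (P := fun n ψ => NearUncondWith (2 * K' * ((n : ℝ) + 1))⁻¹ K' (x ∘ ψ))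
    (fun n ψ hψ => by
      obtain ⟨θ, hθ, hnu⟩ := hK _ (hlevel n).1 (hlevel n).2 X (x ∘ ψ) (fun i => hx _)
        (hxw.comp_strictMono hψ)
      exact ⟨θ, hθ, hnu.mono (le_max_left K 1)⟩)
    fun n ψ θ hnu hθ => hnu.comp_strictMono hθ
  exact ⟨φ, hφ, quasiGreedyWith_of_nearUncondWith_tails (by linarith) (fun i => hx _) htail⟩
end

section
/- Let C(δ) be the infimum of constants C such that every normalized sequence (1/δ)-equivalent to the unit vector basis of c₀ has an unconditional subsequence with constant C, and let L(δ₁) be the near-unconditionality constant for large coefficients. If δ₁ ≤ δ then C(δ) ≤ L(δ₁)·(1 + δ₁/δ) + δ₁/δ. -/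
open Filter ENNReal

noncomputable section

/-- A normalized sequence in a (real) Banach space, bundled. -/
structure NSeq where
  X : Type
  [grp : NormedAddCommGroup X]
  [mod : NormedSpace ℝ X]
  [comp : CompleteSpace X]
  x : ℕ → X
  norm_one : ∀ i, ‖x i‖ = 1

attribute [instance] NSeq.grp NSeq.mod NSeq.comp

/-- The bundled sequence is weakly null. -/
def NSeq.WeaklyNull (s : NSeq) : Prop :=
  ∀ f : s.X →L[ℝ] ℝ, Tendsto (fun i => f (s.x i)) atTop (nhds 0)

/-- `L((yᵢ), δ)` (value in `ℝ≥0∞`): the least `C` such that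
`‖∑_{i∈E} aᵢyᵢ‖ ≤ C‖∑ aᵢyᵢ‖` whenever `δ ≤ |aᵢ| ≤ 1` on the support of `a` and `E` is
finite. -/
def LS {X : Type} [NormedAddCommGroup X] [NormedSpace ℝ X] (δ : ℝ) (y : ℕ → X) : ℝ≥0∞ :=
  sInf {C | ∀ a : ℕ →₀ ℝ, (∀ i, |a i| ≤ 1) → (∀ i ∈ a.support, δ ≤ |a i|) →
    ∀ E : Finset ℕ,
    (‖∑ i ∈ E, a i • y i‖₊ : ℝ≥0∞) ≤ C * (‖∑ i ∈ a.support, a i • y i‖₊ : ℝ≥0∞)}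

/-- `L(δ)`: sup over normalized weakly null sequences of the inf over subsequences. -/
def Lfun (δ : ℝ) : ℝ≥0∞ :=
  ⨆ (s : NSeq) (_ : s.WeaklyNull), ⨅ (φ : ℕ → ℕ) (_ : StrictMono φ), LS δ (s.x ∘ φ)

/-- The bundled normalized sequence is `Cc`-equivalent to the unit vector basis of `c₀`
(whose norm of `∑ aᵢ eᵢ` is `sup |aᵢ|`). -/
def NSeq.EquivC0 (s : NSeq) (Cc : ℝ) : Prop :=
  ∃ A B : ℝ, 0 < A ∧ 0 < B ∧ B / A ≤ Cc ∧
    ∀ a : ℕ →₀ ℝ,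
      A * ‖∑ i ∈ a.support, a i • s.x i‖ ≤ (⨆ i, |a i|) ∧
      (⨆ i, |a i|) ≤ B * ‖∑ i ∈ a.support, a i • s.x i‖

/-- Unconditional with constant `C ∈ ℝ≥0∞`. -/
def UncondWith {X : Type} [NormedAddCommGroup X] [NormedSpace ℝ X]
    (C : ℝ≥0∞) (y : ℕ → X) : Prop :=
  ∀ a : ℕ →₀ ℝ, ∀ E : Finset ℕ,
    (‖∑ i ∈ E, a i • y i‖₊ : ℝ≥0∞) ≤ C * (‖∑ i ∈ a.support, a i • y i‖₊ : ℝ≥0∞)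

/-- `C(δ)`: the infimum of constants `C` such that every normalized sequence
`(1/δ)`-equivalent to the unit vector basis of `c₀` has an unconditional subsequence
with constant `C`. -/
def Cfun (δ : ℝ) : ℝ≥0∞ :=
  sInf {C | ∀ s : NSeq, s.EquivC0 (1 / δ) →
    ∃ φ : ℕ → ℕ, StrictMono φ ∧ UncondWith C (s.x ∘ φ)}

/-! A sequence `(1/δ)`-equivalent to the unit vector basis of `c₀` is weakly null, so it has a
subsequence satisfying the large-coefficient estimate with a constant `Λ` close to `L(δ₁)`.
Given coefficients `a` with `m = max |aᵢ|`, split them at `δ₁ m`. By the `c₀`-equivalence, every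
partial sum of the small ones has norm at most `(δ₁/δ)‖∑ aᵢyᵢ‖`, while the large ones, divided
by `m`, satisfy `δ₁ ≤ |aᵢ| ≤ 1`; so a partial sum of the large ones is at most
`Λ(1 + δ₁/δ)‖∑ aᵢyᵢ‖`. -/

namespace Finsupp

theorem bddAbove_range_abs (a : ℕ →₀ ℝ) : BddAbove (Set.range fun i => |a i|) := by
  rw [Set.range_comp']
  exact (a.finite_range.image _).bddAbove

theorem abs_le_iSup_abs (a : ℕ →₀ ℝ) (i : ℕ) : |a i| ≤ ⨆ j, |a j| :=
  le_ciSup a.bddAbove_range_abs i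

theorem iSup_abs_embDomain (f : ℕ ↪ ℕ) (a : ℕ →₀ ℝ) :
    ⨆ j, |a.embDomain f j| = ⨆ i, |a i| := by
  have h0 : 0 ≤ ⨆ i, |a i| := Real.iSup_nonneg fun i => abs_nonneg _
  refine le_antisymm (ciSup_le fun j => ?_) (ciSup_le fun i => ?_)
  · by_cases hj : j ∈ Set.range f
    · obtain ⟨i, rfl⟩ := hj
      rw [embDomain_apply_self]
      exact a.abs_le_iSup_abs i
    · rwa [embDomain_of_notMem_range f a j hj, abs_zero]
  · rw [← embDomain_apply_self f a i]
    exact abs_le_iSup_abs _ (f i)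

end Finsupp

section Estimates

variable {X : Type} [NormedAddCommGroup X] [NormedSpace ℝ X]

theorem sum_support_smul_eq_of_subset (a : ℕ →₀ ℝ) (y : ℕ → X) {G : Finset ℕ}
    (h : a.support ⊆ G) : ∑ i ∈ a.support, a i • y i = ∑ i ∈ G, a i • y i :=
  Finset.sum_subset h fun i _ hi => by rw [Finsupp.notMem_support_iff.1 hi, zero_smul]

def C0Upper (A : ℝ) (y : ℕ → X) : Prop :=
  ∀ a : ℕ →₀ ℝ, A * ‖∑ i ∈ a.support, a i • y i‖ ≤ ⨆ i, |a i|

def C0Lower (B : ℝ) (y : ℕ → X) : Prop :=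
  ∀ a : ℕ →₀ ℝ, (⨆ i, |a i|) ≤ B * ‖∑ i ∈ a.support, a i • y i‖

/-- The real-valued form of the condition defining `LS δ y`. -/
def LargeCoeffBound (δ Λ : ℝ) (y : ℕ → X) : Prop :=
  ∀ a : ℕ →₀ ℝ, (∀ i, |a i| ≤ 1) → (∀ i ∈ a.support, δ ≤ |a i|) → ∀ E : Finset ℕ,
    ‖∑ i ∈ E, a i • y i‖ ≤ Λ * ‖∑ i ∈ a.support, a i • y i‖

theorem sum_embDomain_smul (y : ℕ → X) (f : ℕ ↪ ℕ) (a : ℕ →₀ ℝ) :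
    ∑ j ∈ (a.embDomain f).support, a.embDomain f j • y j =
      ∑ i ∈ a.support, a i • y (f i) :=
  Finsupp.sum_embDomain (g := fun j c => c • y j)

theorem C0Upper.comp {A : ℝ} {y : ℕ → X} (h : C0Upper A y) (f : ℕ ↪ ℕ) : C0Upper A (y ∘ f) :=
  fun a => by simpa [sum_embDomain_smul, Finsupp.iSup_abs_embDomain] using h (a.embDomain f)

theorem C0Lower.comp {B : ℝ} {y : ℕ → X} (h : C0Lower B y) (f : ℕ ↪ ℕ) : C0Lower B (y ∘ f) :=
  fun a => by simpa [sum_embDomain_smul, Finsupp.iSup_abs_embDomain] using h (a.embDomain f)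

theorem C0Upper.mul_norm_sum_le {A : ℝ} {y : ℕ → X} (h : C0Upper A y) (G : Finset ℕ)
    (c : ℕ → ℝ) {t : ℝ} (ht : 0 ≤ t) (hc : ∀ i ∈ G, |c i| ≤ t) :
    A * ‖∑ i ∈ G, c i • y i‖ ≤ t := by
  classical
  let a : ℕ →₀ ℝ := Finsupp.onFinset G (fun i => if i ∈ G then c i else 0)
    fun i hi => by by_contra hiG; simp [hiG] at hi
  have hsum : ∑ i ∈ a.support, a i • y i = ∑ i ∈ G, c i • y i := by
    rw [sum_support_smul_eq_of_subset a y Finsupp.support_onFinset_subset]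
    exact Finset.sum_congr rfl fun i hi => by simp [a, hi]
  have hsup : (⨆ i, |a i|) ≤ t := ciSup_le fun i => by
    by_cases hi : i ∈ G <;> simp [a, hi, hc, ht]
  simpa [hsum] using (h a).trans hsup

theorem C0Upper.tendsto_apply_zero {A : ℝ} {y : ℕ → X} (h : C0Upper A y) (hA : 0 < A)
    (f : X →L[ℝ] ℝ) : Tendsto (fun i => f (y i)) atTop (nhds 0) := by
  have hsign : ∀ i, |(SignType.sign (f (y i)) : ℝ)| ≤ 1 := fun i => by
    rcases SignType.sign (f (y i)) with _ | _ | _ <;> simp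
  have hfin : ∀ F : Finset ℕ, ∑ i ∈ F, |f (y i)| ≤ ‖f‖ / A := fun F => by
    have hnorm : ‖∑ i ∈ F, (SignType.sign (f (y i)) : ℝ) • y i‖ ≤ 1 / A := by
      rw [le_div_iff₀' hA]
      exact h.mul_norm_sum_le F _ zero_le_one fun i _ => hsign i
    calc ∑ i ∈ F, |f (y i)|
        = f (∑ i ∈ F, (SignType.sign (f (y i)) : ℝ) • y i) := by
          simp [map_sum, sign_mul_self]
      _ ≤ ‖f‖ * ‖∑ i ∈ F, (SignType.sign (f (y i)) : ℝ) • y i‖ :=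
          (le_abs_self _).trans (f.le_opNorm _)
      _ ≤ ‖f‖ * (1 / A) := by gcongr
      _ = ‖f‖ / A := by ring
  exact (summable_of_sum_le (fun i => abs_nonneg _) hfin).of_abs.tendsto_atTop_zero

theorem LargeCoeffBound.norm_sum_le_of_abs_le {δ Λ m : ℝ} {y : ℕ → X} (h : LargeCoeffBound δ Λ y)
    (hm : 0 < m) (a : ℕ →₀ ℝ) (ha : ∀ i, |a i| ≤ m) (hδ : ∀ i ∈ a.support, δ * m ≤ |a i|)
    (E : Finset ℕ) : ‖∑ i ∈ E, a i • y i‖ ≤ Λ * ‖∑ i ∈ a.support, a i • y i‖ := by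
  have hsupp : (m⁻¹ • a).support = a.support := Finsupp.support_smul_eq (inv_ne_zero hm.ne')
  have habs : ∀ i, |(m⁻¹ • a) i| = m⁻¹ * |a i| := fun i => by
    rw [Finsupp.smul_apply, smul_eq_mul, abs_mul, abs_of_pos (inv_pos.2 hm)]
  have hscale : ∀ G : Finset ℕ, ∑ i ∈ G, (m⁻¹ • a) i • y i = m⁻¹ • ∑ i ∈ G, a i • y i :=
    fun G => by simp only [Finsupp.smul_apply, smul_eq_mul, Finset.smul_sum, mul_smul]
  have hb := h (m⁻¹ • a)
    (fun i => by rw [habs, inv_mul_le_iff₀ hm, mul_one]; exact ha i)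
    (fun i hi => by rw [habs, le_inv_mul_iff₀ hm, mul_comm]; exact hδ i (hsupp ▸ hi)) E
  rw [hsupp, hscale, hscale, norm_smul, norm_smul, mul_left_comm] at hb
  exact le_of_mul_le_mul_left hb (norm_pos_iff.2 (inv_ne_zero hm.ne'))

theorem norm_sum_le_of_c0_estimates {A B δ Λ : ℝ} {y : ℕ → X} (hA : 0 < A) (hδ : 0 ≤ δ)
    (hup : C0Upper A y) (hlow : C0Lower B y) (hΛ : LargeCoeffBound δ Λ y) (hΛ0 : 0 ≤ Λ)
    (a : ℕ →₀ ℝ) (E : Finset ℕ) :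
    ‖∑ i ∈ E, a i • y i‖ ≤ (Λ * (1 + δ * B / A) + δ * B / A) * ‖∑ i ∈ a.support, a i • y i‖ := by
  classical
  rcases eq_or_ne a 0 with rfl | ha0
  · simp
  set m := ⨆ i, |a i|
  set N := ‖∑ i ∈ a.support, a i • y i‖
  set κ := δ * B / A
  have hm : 0 < m := by
    obtain ⟨i, hi⟩ := Finsupp.ne_iff.1 ha0
    exact (abs_pos.2 hi).trans_le (a.abs_le_iSup_abs i)
  set aL := a.filter fun i => δ * m ≤ |a i|
  set aS := a.filter fun i => ¬δ * m ≤ |a i|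
  have hsplit : ∀ G : Finset ℕ,
      ∑ i ∈ G, a i • y i = ∑ i ∈ G, aL i • y i + ∑ i ∈ G, aS i • y i := fun G => by
    rw [← Finset.sum_add_distrib]
    refine Finset.sum_congr rfl fun i _ => ?_
    rw [← add_smul, ← Finsupp.add_apply, Finsupp.filter_add_filter_not]
  have hsmall : ∀ G : Finset ℕ, ‖∑ i ∈ G, aS i • y i‖ ≤ κ * N := fun G => by
    have hS : A * ‖∑ i ∈ G, aS i • y i‖ ≤ δ * m :=
      hup.mul_norm_sum_le G _ (by positivity) fun i _ => by
        simp only [aS, Finsupp.filter_apply]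
        split_ifs with hi
        · rw [abs_zero]; positivity
        · exact (not_le.1 hi).le
    have hmN : δ * m ≤ δ * (B * N) := mul_le_mul_of_nonneg_left (hlow a) hδ
    rw [div_mul_eq_mul_div, le_div_iff₀' hA]
    linarith
  have hlarge_supp : ‖∑ i ∈ aL.support, aL i • y i‖ ≤ (1 + κ) * N := by
    have hL : ∑ i ∈ aL.support, aL i • y i =
        ∑ i ∈ a.support, a i • y i - ∑ i ∈ a.support, aS i • y i := by
      rw [hsplit a.support, add_sub_cancel_right,
        sum_support_smul_eq_of_subset aL y (Finset.filter_subset _ _)]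
    calc ‖∑ i ∈ aL.support, aL i • y i‖ ≤ N + κ * N := by
          rw [hL]; exact (norm_sub_le _ _).trans (add_le_add le_rfl (hsmall _))
      _ = (1 + κ) * N := by ring
  have hlarge : ‖∑ i ∈ E, aL i • y i‖ ≤ Λ * ‖∑ i ∈ aL.support, aL i • y i‖ := by
    refine hΛ.norm_sum_le_of_abs_le hm aL (fun i => ?_) (fun i hi => ?_) E
    · simp only [aL, Finsupp.filter_apply]
      split_ifs
      · exact a.abs_le_iSup_abs i
      · rw [abs_zero]; exact hm.le
    · rw [Finsupp.support_filter, Finset.mem_filter] at hi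
      simpa only [aL, Finsupp.filter_apply, if_pos hi.2] using hi.2
  calc ‖∑ i ∈ E, a i • y i‖ ≤ ‖∑ i ∈ E, aL i • y i‖ + ‖∑ i ∈ E, aS i • y i‖ := by
        rw [hsplit]; exact norm_add_le _ _
    _ ≤ Λ * ((1 + κ) * N) + κ * N :=
        add_le_add (hlarge.trans (mul_le_mul_of_nonneg_left hlarge_supp hΛ0)) (hsmall E)
    _ = (Λ * (1 + κ) + κ) * N := by ring

theorem exists_largeCoeffBound_of_LS_lt {δ : ℝ} {y : ℕ → X} {L : ℝ≥0∞} (h : LS δ y < L) :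
    ∃ Λ : ℝ, 0 ≤ Λ ∧ ENNReal.ofReal Λ < L ∧ LargeCoeffBound δ Λ y := by
  obtain ⟨Λ, hΛ, hΛL⟩ := sInf_lt_iff.1 h
  have hΛtop : Λ ≠ ⊤ := hΛL.ne_top
  refine ⟨Λ.toReal, ENNReal.toReal_nonneg, by rwa [ENNReal.ofReal_toReal hΛtop], ?_⟩
  intro a ha hδ E
  have hE := hΛ a ha hδ E
  rw [← enorm_eq_nnnorm, ← enorm_eq_nnnorm, ← ofReal_norm, ← ofReal_norm,
    ← ENNReal.ofReal_toReal hΛtop, ← ENNReal.ofReal_mul ENNReal.toReal_nonneg,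
    ENNReal.ofReal_le_ofReal_iff (by positivity)] at hE
  exact hE

theorem UncondWith.of_norm_sum_le {K : ℝ} {y : ℕ → X}
    (h : ∀ (a : ℕ →₀ ℝ) (E : Finset ℕ),
      ‖∑ i ∈ E, a i • y i‖ ≤ K * ‖∑ i ∈ a.support, a i • y i‖) :
    UncondWith (ENNReal.ofReal K) y := fun a E => by
  rw [← enorm_eq_nnnorm, ← enorm_eq_nnnorm, ← ofReal_norm, ← ofReal_norm,
    ← ENNReal.ofReal_mul' (norm_nonneg _)]
  exact ENNReal.ofReal_le_ofReal (h a E)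

theorem UncondWith.mono {C C' : ℝ≥0∞} {y : ℕ → X} (h : UncondWith C y) (hC : C ≤ C') :
    UncondWith C' y := fun a E => (h a E).trans (mul_le_mul_left hC _)

end Estimates

theorem ENNReal.le_mul_add_of_forall_lt {c L r : ℝ≥0∞} (hr : r ≠ ⊤)
    (h : ∀ L', L < L' → c ≤ L' * (1 + r) + r) : c ≤ L * (1 + r) + r := by
  rcases eq_or_ne L ⊤ with rfl | hL
  · rw [ENNReal.top_mul (by simp), top_add]
    exact le_top
  have := nhdsGT_neBot_of_exists_gt ⟨⊤, hL.lt_top⟩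
  have hcont : Tendsto (fun L' => L' * (1 + r) + r) (nhdsWithin L (Set.Ioi L))
      (nhds (L * (1 + r) + r)) :=
    (((ENNReal.continuous_mul_const (by simp [hr])).add continuous_const).tendsto L).mono_left
      nhdsWithin_le_nhds
  exact ge_of_tendsto hcont (eventually_nhdsWithin_of_forall h)

theorem NSeq.EquivC0.exists_uncondWith {s : NSeq} {δ δ₁ : ℝ} {L : ℝ≥0∞}
    (hs : s.EquivC0 (1 / δ)) (hδ₁ : 0 ≤ δ₁) (hL : Lfun δ₁ < L) :
    ∃ φ : ℕ → ℕ, StrictMono φ ∧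
      UncondWith (L * (1 + ENNReal.ofReal (δ₁ / δ)) + ENNReal.ofReal (δ₁ / δ)) (s.x ∘ φ) := by
  obtain ⟨A, B, hA, hB, hBA, hest⟩ := hs
  have hup : C0Upper A s.x := fun a => (hest a).1
  have hlow : C0Lower B s.x := fun a => (hest a).2
  have hwn : s.WeaklyNull := hup.tendsto_apply_zero hA
  obtain ⟨φ, hφ, hLS⟩ : ∃ φ : ℕ → ℕ, StrictMono φ ∧ LS δ₁ (s.x ∘ φ) < L := by
    have h := (le_iSup₂ (f := fun (s : NSeq) (_ : s.WeaklyNull) =>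
      ⨅ (φ : ℕ → ℕ) (_ : StrictMono φ), LS δ₁ (s.x ∘ φ)) s hwn).trans_lt hL
    simpa only [iInf_lt_iff, exists_prop] using h
  obtain ⟨Λ, hΛ0, hΛL, hΛ⟩ := exists_largeCoeffBound_of_LS_lt hLS
  let f : ℕ ↪ ℕ := ⟨φ, hφ.injective⟩
  have hκ : δ₁ * B / A ≤ δ₁ / δ := by
    rw [mul_div_assoc, div_eq_mul_one_div δ₁ δ]
    exact mul_le_mul_of_nonneg_left hBA hδ₁
  refine ⟨φ, hφ, (UncondWith.of_norm_sum_le (norm_sum_le_of_c0_estimates hA hδ₁ (hup.comp f)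
    (hlow.comp f) hΛ hΛ0)).mono ?_⟩
  have hκ0 : 0 ≤ δ₁ * B / A := by positivity
  rw [ENNReal.ofReal_add (by positivity) hκ0, ENNReal.ofReal_mul hΛ0,
    ENNReal.ofReal_add zero_le_one hκ0, ENNReal.ofReal_one]
  gcongr

/-- If `δ₁ ≤ δ` then `C(δ) ≤ L(δ₁)·(1 + δ₁/δ) + δ₁/δ`. -/
theorem c0_problem_upper_bound :
    ∀ δ δ₁ : ℝ, 0 < δ₁ → δ₁ ≤ δ → δ ≤ 1 →
      Cfun δ ≤ Lfun δ₁ * (1 + ENNReal.ofReal (δ₁ / δ)) + ENNReal.ofReal (δ₁ / δ) := by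
  intro δ δ₁ hδ₁ _ _
  exact ENNReal.le_mul_add_of_forall_lt ENNReal.ofReal_ne_top fun L hL =>
    sInf_le fun s hs => hs.exists_uncondWith hδ₁.le hL
end
end

section
/- Let k ≥ 4, k₀ = ⌊√k⌋, and fix positive integers n₁ < ⋯ < n_{k₀} with ∑_{1 ≤ j < j' ≤ k₀} n_j / n_{j'} < 2^{-k}. For m, n ∈ ℕ and 1 ≤ l ≤ m, let R_{n k₀^{m-l}, l} be the Rademacher resolutions (with weights w_{j k₀} = 1/k₀ for j = 1,…,k₀ and w_j = 0 otherwise). Then the resolutions R_{n k₀^{m-l}, l}, l = 1,…,m, are pairwise 5/k₀-orthogonal, and ⟨R_{n k₀^{m-l}, l}, R_{n k₀^{m-l}, l}⟩ ≤ 1 + 2/k₀ for each l. -/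
noncomputable section

/-- A resolution, presented as a finite list of (colour, coefficient) pairs. -/
abbrev Res := List (ℕ × ℝ)

/-- Given placements `l, m` of the supports of representations `(x, x*)` of `r` and
`(y, y*)` of `s`, the value `x*(y) = ∑ᵢ x*(i)·y(i)`. -/
def pairSum (r s : Res) (l : Fin r.length → ℕ) (m : Fin s.length → ℕ) : ℝ :=
  ∑ u : Fin r.length, ∑ v : Fin s.length,
    if l u = m v then
      (2 : ℝ) ^ ((r.get u).1) * (r.get u).2 * (2 : ℝ) ^ (-((s.get v).1 : ℤ))
    else 0

/-- `[r, s]`: the supremum of `x*(y)` over all representations. -/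
def bra (r s : Res) : ℝ :=
  sSup {t | ∃ (l : Fin r.length → ℕ) (m : Fin s.length → ℕ),
    StrictMono l ∧ StrictMono m ∧ t = pairSum r s l m}

/-- `⟨r, s⟩ = max([r,s], [s,r])`. -/
def angled (r s : Res) : ℝ := max (bra r s) (bra s r)

/-- `R_n`: colour `j·k₀` repeated `n·n_j` times for `j = 1,…,k₀` (in increasing order of
`j`), with coefficient `1/(n·n_j·k₀)` at every coordinate of colour `j·k₀`. -/
def RadBase (k₀ : ℕ) (nn : ℕ → ℕ) (n : ℕ) : Res :=
  (List.range k₀).flatMap fun j =>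
    List.replicate (n * nn (j + 1))
      ((j + 1) * k₀, 1 / ((n : ℝ) * (nn (j + 1) : ℝ) * (k₀ : ℝ)))

/-- `(r,…,r)_m`: concatenation of `m` copies of `r`, coefficients divided by `m`. -/
def repRes (m : ℕ) (r : Res) : Res :=
  (List.replicate m (r.map fun p => (p.1, p.2 / (m : ℝ)))).flatten

/-- The Rademacher resolution `R_{n,l} = (R_n,…,R_n)_{k₀^{l-1}}`. -/
def Rademacher (k₀ : ℕ) (nn : ℕ → ℕ) (n l : ℕ) : Res :=
  repRes (k₀ ^ (l - 1)) (RadBase k₀ nn n)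

/-!
`repRes M (RadBase k₀ nn N)` is a concatenation of `M·k₀` constant runs: run `t` is colour class
`j = t % k₀` of copy `t / k₀`, with colour `(j+1)·k₀` and coefficient `1/(T·n_{j+1}·k₀)`, where
`T = M·N` is the same for all resolutions of the theorem. A representation matches coordinates
monotonically, and a matched pair of colour indices `a, b` contributes `2^{(a-b)k₀}/(T·n_{a+1}·k₀)`.

Pairs with `a < b` contribute at most `2^{-k₀}` times the total mass `1`; pairs with `a > b`, summed
over the colour class of the second coordinate, at most `2^{k₀²-k₀}/k₀ · ∑_{j<j'} n_j/n_{j'}`, which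
is `≤ 2^{-k₀}/k₀`. The pairs with `a = b` form a chain along which both the copy of the second
coordinate (`M₂` values) and the run of the first (`M₁·k₀` values) increase, so they split into at
most `M₂ + M₁·k₀` classes, each inside one run of the second resolution, of mass `1/(M₂·k₀)`. Hence
`[R₁, R₂] ≤ 2/k₀ + M₁/M₂`, and symmetrically `≤ 2/k₀ + M₂/M₁`; the smaller copy ratio is at most
`1/k₀` when `l ≠ l'`, and `1` when `l = l'`.
-/

open Finset

section Runs

variable {α : Type*} (c : ℕ → ℕ) (f : ℕ → α) (K : ℕ)

def runs : List α := (List.range K).flatMap fun t => List.replicate (c t) (f t)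

def runStart (t : ℕ) : ℕ := ∑ i ∈ range t, c i

def runIdx (p : ℕ) : ℕ := Nat.findGreatest (fun t => runStart c t ≤ p) K

variable {c f K}

lemma runs_succ : runs c f (K + 1) = runs c f K ++ List.replicate (c K) (f K) := by
  simp [runs, List.range_succ]

lemma length_runs : (runs c f K).length = runStart c K := by
  induction K with
  | zero => simp [runs, runStart]
  | succ K ih => simp [runs_succ, ih, runStart, sum_range_succ]

lemma runStart_mono : Monotone (runStart c) := fun _ _ h =>
  sum_le_sum_of_subset (range_subset_range.2 h)

lemma getElem_runs_of_mem_run {t p : ℕ} (ht : t < K) (hp : runStart c t ≤ p)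
    (hp' : p < runStart c (t + 1)) (h : p < (runs c f K).length) :
    (runs c f K)[p] = f t := by
  induction K with
  | zero => omega
  | succ K ih =>
    simp only [runs_succ]
    rcases Nat.lt_succ_iff_lt_or_eq.1 ht with ht | rfl
    · have hpK : p < (runs c f K).length :=
        length_runs.symm ▸ hp'.trans_le (runStart_mono ht)
      rw [List.getElem_append_left hpK, ih ht hpK]
    · rw [List.getElem_append_right (length_runs.symm ▸ hp), List.getElem_replicate]

lemma runStart_runIdx_le (p : ℕ) : runStart c (runIdx c K p) ≤ p :=
  Nat.findGreatest_spec (P := fun t => runStart c t ≤ p) (Nat.zero_le K) (by simp [runStart])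

lemma runIdx_lt {p : ℕ} (hp : p < runStart c K) : runIdx c K p < K :=
  (Nat.findGreatest_le K).lt_of_ne fun h => (runStart_runIdx_le (K := K) p).not_gt (h ▸ hp)

lemma lt_runStart_runIdx_succ {p : ℕ} (hp : p < runStart c K) :
    p < runStart c (runIdx c K p + 1) :=
  not_le.1 <| Nat.findGreatest_is_greatest (P := fun t => runStart c t ≤ p)
    (Nat.lt_succ_self _) (runIdx_lt hp)

lemma runIdx_mono : Monotone (runIdx c K) := fun _ _ h =>
  Nat.findGreatest_mono_left (fun _ ht => ht.trans h) K

lemma getElem_runs {p : ℕ} (h : p < (runs c f K).length) :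
    (runs c f K)[p] = f (runIdx c K p) := by
  rw [length_runs] at h
  exact getElem_runs_of_mem_run (runIdx_lt h) (runStart_runIdx_le p) (lt_runStart_runIdx_succ h) _

lemma card_runIdx_eq_le (t : ℕ) :
    #{p : Fin (runs c f K).length | runIdx c K p = t} ≤ c t := by
  calc #{p : Fin (runs c f K).length | runIdx c K p = t}
      ≤ #(Ico (runStart c t) (runStart c (t + 1))) := by
        refine card_le_card_of_injOn (fun p => (p : ℕ)) (fun p hp => ?_) Fin.val_injective.injOn
        have hp' : (p : ℕ) < runStart c K := length_runs (f := f) ▸ p.isLt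
        obtain rfl := (mem_filter.1 hp).2
        exact mem_Ico.2 ⟨runStart_runIdx_le _, lt_runStart_runIdx_succ hp'⟩
    _ = c t := by simp [runStart, sum_range_succ]

lemma sum_comp_runIdx_le {R : Type*} [AddCommMonoid R] [PartialOrder R] [IsOrderedAddMonoid R]
    (F : ℕ → R) (hF : ∀ t, 0 ≤ F t) :
    ∑ p : Fin (runs c f K).length, F (runIdx c K p) ≤ ∑ t ∈ range K, c t • F t := by
  have hmaps : ∀ p ∈ (univ : Finset (Fin (runs c f K).length)), runIdx c K p ∈ range K :=
    fun p _ => mem_range.2 (runIdx_lt (length_runs (f := f) ▸ p.isLt))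
  rw [← sum_fiberwise_of_maps_to hmaps]
  refine sum_le_sum fun t _ => ?_
  rw [sum_congr rfl fun p hp => congrArg F (mem_filter.1 hp).2, sum_const]
  exact nsmul_le_nsmul_left (hF t) (card_runIdx_eq_le t)

lemma map_runs {β : Type*} (g : α → β) : (runs c f K).map g = runs c (g ∘ f) K := by
  simp [runs, List.map_flatMap]

lemma flatten_replicate_runs (M : ℕ) :
    (List.replicate M (runs c f K)).flatten
      = runs (fun t => c (t % K)) (fun t => f (t % K)) (M * K) := by
  induction M with
  | zero => simp [runs]
  | succ M ih =>
    rw [List.replicate_succ', List.flatten_append, ih, Nat.succ_mul, runs, runs, runs,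
      List.range_add, List.flatMap_append, List.flatMap_map]
    simp only [List.flatten_cons, List.flatten_nil, List.append_nil, Nat.mul_add_mod_self_right]
    congr 1
    refine List.flatMap_congr fun t ht => ?_
    rw [Nat.mod_eq_of_lt (List.mem_range.1 ht)]

end Runs

lemma sum_range_mul_mod {R : Type*} [AddCommMonoid R] (G : ℕ → R) (M k₀ : ℕ) :
    ∑ t ∈ range (M * k₀), G (t % k₀) = M • ∑ j ∈ range k₀, G j := by
  induction M with
  | zero => simp
  | succ M ih =>
    rw [Nat.succ_mul, sum_range_add, ih, succ_nsmul]
    simp only [Nat.mul_add_mod_self_right]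
    rw [sum_congr rfl fun j hj => congrArg G (Nat.mod_eq_of_lt (mem_range.1 hj))]

lemma sum_le_of_chain {ι R : Type*} [AddCommMonoid R] [PartialOrder R] [IsOrderedAddMonoid R]
    (P : Finset ι) (f g : ι → ℕ) {A B : ℕ}
    (hf : ∀ p ∈ P, f p < A) (hg : ∀ p ∈ P, g p < B)
    (hchain : ∀ p ∈ P, ∀ q ∈ P, f p ≤ f q ∧ g p ≤ g q ∨ f q ≤ f p ∧ g q ≤ g p)
    (w : ι → R) {C : R} (hC : 0 ≤ C)
    (hfib : ∀ p₀ ∈ P, ∑ p ∈ P with f p = f p₀ ∧ g p = g p₀, w p ≤ C) :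
    ∑ p ∈ P, w p ≤ (A + B) • C := by
  have hmaps : ∀ p ∈ P, f p + g p ∈ range (A + B) := fun p hp =>
    mem_range.2 (Nat.add_lt_add (hf p hp) (hg p hp))
  rw [← sum_fiberwise_of_maps_to hmaps]
  -- on a chain, `f + g` determines the pair `(f, g)`
  have hfibre : ∀ y ∈ range (A + B), ∑ p ∈ P with f p + g p = y, w p ≤ C := by
    intro y _
    rcases (P.filter fun p => f p + g p = y).eq_empty_or_nonempty with he | ⟨p₀, hp₀⟩
    · simpa [he] using hC
    rw [mem_filter] at hp₀
    convert hfib p₀ hp₀.1 using 2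
    ext p
    simp only [mem_filter, and_congr_right_iff]
    intro hp
    rcases hchain p hp p₀ hp₀.1 with h | h <;> omega
  simpa using sum_le_sum hfibre

section Matching

variable {ι κ : Type*} [LinearOrder ι] [LinearOrder κ]

def IsMonotoneMatching (P : Finset (ι × κ)) : Prop :=
  ∀ p ∈ P, ∀ q ∈ P, p.1 < q.1 ↔ p.2 < q.2

lemma isMonotoneMatching_filter [Fintype ι] [Fintype κ] {l : ι → ℕ} {m : κ → ℕ}
    (hl : StrictMono l) (hm : StrictMono m) :
    IsMonotoneMatching ({p : ι × κ | l p.1 = m p.2} : Finset (ι × κ)) := by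
  intro p hp q hq
  rw [← hl.lt_iff_lt, ← hm.lt_iff_lt, (mem_filter.1 hp).2, (mem_filter.1 hq).2]

namespace IsMonotoneMatching

variable {P : Finset (ι × κ)} (hP : IsMonotoneMatching P)
include hP

lemma swap : IsMonotoneMatching (P.map (Equiv.prodComm ι κ).toEmbedding) := by
  intro p hp q hq
  rw [mem_map_equiv] at hp hq
  exact (hP _ hp _ hq).symm

lemma fst_le_fst {p q : ι × κ} (hp : p ∈ P) (hq : q ∈ P) (h : p.2 ≤ q.2) : p.1 ≤ q.1 :=
  not_lt.1 fun h' => (not_lt.2 h) ((hP q hq p hp).1 h')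

lemma injOn_snd : Set.InjOn Prod.snd (P : Set (ι × κ)) := fun _ hp _ hq h =>
  Prod.ext ((hP.fst_le_fst hp hq h.le).antisymm (hP.fst_le_fst hq hp h.ge)) h

variable {R : Type*} [AddCommMonoid R] [PartialOrder R] [IsOrderedAddMonoid R]

lemma sum_le_sum_snd [Fintype κ] (F : κ → R) (hF : ∀ v, 0 ≤ F v) :
    ∑ p ∈ P, F p.2 ≤ ∑ v, F v := by
  rw [← sum_image hP.injOn_snd]
  exact sum_le_sum_of_subset_of_nonneg (subset_univ _) fun v _ _ => hF v

lemma sum_le_sum_fst [Fintype ι] (F : ι → R) (hF : ∀ u, 0 ≤ F u) :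
    ∑ p ∈ P, F p.1 ≤ ∑ u, F u := by
  simpa using hP.swap.sum_le_sum_snd F hF

end IsMonotoneMatching

end Matching

def coordPairing (e e' : ℕ × ℝ) : ℝ := (2 : ℝ) ^ e.1 * e.2 * (2 : ℝ) ^ (-(e'.1 : ℤ))

lemma pairSum_eq_sum_filter (r s : Res) (l : Fin r.length → ℕ) (m : Fin s.length → ℕ) :
    pairSum r s l m = ∑ p ∈ ({p | l p.1 = m p.2} : Finset (Fin r.length × Fin s.length)),
      coordPairing (r.get p.1) (s.get p.2) := by
  rw [sum_filter, Fintype.sum_prod_type]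
  rfl

def ratioSum (k₀ : ℕ) (nn : ℕ → ℕ) : ℝ :=
  ∑ j ∈ Icc 1 k₀, ∑ j' ∈ Icc 1 k₀, if j < j' then (nn j : ℝ) / (nn j' : ℝ) else 0

lemma ratioSum_eq_sum_range (k₀ : ℕ) (nn : ℕ → ℕ) :
    ratioSum k₀ nn = ∑ b ∈ range k₀, ∑ i ∈ range k₀,
      if b < i then (nn (b + 1) : ℝ) / (nn (i + 1) : ℝ) else 0 := by
  have hshift : ∀ g : ℕ → ℝ, ∑ j ∈ Icc 1 k₀, g j = ∑ b ∈ range k₀, g (b + 1) := fun g => by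
    rw [range_eq_Ico, sum_Ico_add', zero_add, Ico_add_one_right_eq_Icc]
  simp only [ratioSum, hshift, Nat.add_lt_add_iff_right]

lemma two_zpow_neg_add_div_le {k₀ : ℕ} (hk₀ : 0 < k₀) :
    (2 : ℝ) ^ (-(k₀ : ℤ)) + 2 ^ (-(k₀ : ℤ)) / k₀ ≤ 1 / k₀ := by
  have h : (k₀ : ℝ) + 1 ≤ 2 ^ k₀ := by exact_mod_cast Nat.lt_two_pow_self
  have hk₀' : (0 : ℝ) < k₀ := by exact_mod_cast hk₀
  rw [zpow_neg, zpow_natCast]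
  field_simp
  linarith

section Rademacher

variable (k₀ : ℕ) (nn : ℕ → ℕ)

def radEntry (T j : ℕ) : ℕ × ℝ := ((j + 1) * k₀, 1 / ((T : ℝ) * nn (j + 1) * k₀))

def radRun (M N : ℕ) : ℕ → ℕ := runIdx (fun t => N * nn (t % k₀ + 1)) (M * k₀)

def upperPairing (T b : ℕ) : ℝ :=
  ∑ i ∈ range k₀, if b < i then coordPairing (radEntry k₀ nn T i) (radEntry k₀ nn T b) else 0

lemma repRes_radBase_eq_runs (M N : ℕ) :
    repRes M (RadBase k₀ nn N) = runs (fun t => N * nn (t % k₀ + 1))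
      (fun t => radEntry k₀ nn (M * N) (t % k₀)) (M * k₀) := by
  rw [repRes, show RadBase k₀ nn N = runs _ _ k₀ from rfl, map_runs, flatten_replicate_runs]
  congr 1
  funext t
  simp only [Function.comp, radEntry, Nat.cast_mul, div_div]
  ring_nf

variable {k₀ nn}

lemma get_repRes_radBase (M N : ℕ) (u : Fin (repRes M (RadBase k₀ nn N)).length) :
    (repRes M (RadBase k₀ nn N)).get u = radEntry k₀ nn (M * N) (radRun k₀ nn M N u % k₀) := by
  rw [List.get_eq_getElem, List.getElem_of_eq (repRes_radBase_eq_runs k₀ nn M N), getElem_runs]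
  rfl

lemma radRun_lt (M N : ℕ) (u : Fin (repRes M (RadBase k₀ nn N)).length) :
    radRun k₀ nn M N u < M * k₀ := by
  have hlen : (repRes M (RadBase k₀ nn N)).length
      = runStart (fun t => N * nn (t % k₀ + 1)) (M * k₀) := by
    rw [repRes_radBase_eq_runs, length_runs]
  exact runIdx_lt (hlen ▸ u.isLt)

lemma radRun_mono (M N : ℕ) : Monotone (radRun k₀ nn M N) := runIdx_mono

lemma card_radRun_eq_le (M N t : ℕ) :
    #{v : Fin (repRes M (RadBase k₀ nn N)).length | radRun k₀ nn M N v = t}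
      ≤ N * nn (t % k₀ + 1) := by
  rw [repRes_radBase_eq_runs]
  exact card_runIdx_eq_le t

lemma sum_comp_radRun_le (M N : ℕ) (F : ℕ → ℝ) (hF : ∀ t, 0 ≤ F t) :
    ∑ u : Fin (repRes M (RadBase k₀ nn N)).length, F (radRun k₀ nn M N u)
      ≤ ∑ t ∈ range (M * k₀), N * nn (t % k₀ + 1) * F t := by
  rw [repRes_radBase_eq_runs]
  refine (sum_comp_runIdx_le F hF).trans_eq ?_
  simp [nsmul_eq_mul]

lemma coordPairing_radEntry (T a b : ℕ) :
    coordPairing (radEntry k₀ nn T a) (radEntry k₀ nn T b)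
      = 2 ^ (((a : ℤ) - b) * k₀) * (radEntry k₀ nn T a).2 := by
  simp only [coordPairing, radEntry]
  rw [← zpow_natCast, mul_right_comm, ← zpow_add₀ two_ne_zero]
  push_cast
  ring_nf

lemma upperPairing_nonneg (T b : ℕ) : 0 ≤ upperPairing k₀ nn T b :=
  sum_nonneg fun i _ => by
    split_ifs
    · simp only [coordPairing, radEntry]; positivity
    · exact le_rfl

lemma coordPairing_radEntry_le (T : ℕ) {a : ℕ} (ha : a < k₀) (b : ℕ) :
    coordPairing (radEntry k₀ nn T a) (radEntry k₀ nn T b)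
      ≤ (if a = b then (radEntry k₀ nn T a).2 else 0)
        + 2 ^ (-(k₀ : ℤ)) * (radEntry k₀ nn T a).2 + upperPairing k₀ nn T b := by
  have hw : 0 ≤ (radEntry k₀ nn T a).2 := by simp only [radEntry]; positivity
  have hpair : ∀ i, 0 ≤ coordPairing (radEntry k₀ nn T i) (radEntry k₀ nn T b) := fun i => by
    simp only [coordPairing, radEntry]; positivity
  have hup := upperPairing_nonneg (k₀ := k₀) (nn := nn) T b
  have h2 := zpow_pos (two_pos (α := ℝ)) (-(k₀ : ℤ))
  rcases lt_trichotomy a b with h | rfl | h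
  · rw [if_neg h.ne, coordPairing_radEntry]
    have : (2 : ℝ) ^ (((a : ℤ) - b) * k₀) ≤ 2 ^ (-(k₀ : ℤ)) :=
      zpow_le_zpow_right₀ one_le_two (by nlinarith [(Int.ofNat_lt.2 h)])
    nlinarith
  · rw [if_pos rfl, coordPairing_radEntry, sub_self, zero_mul, zpow_zero, one_mul]
    nlinarith
  · have : coordPairing (radEntry k₀ nn T a) (radEntry k₀ nn T b) ≤ upperPairing k₀ nn T b := by
      have := single_le_sum (f := fun i =>
          if b < i then coordPairing (radEntry k₀ nn T i) (radEntry k₀ nn T b) else 0)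
        (fun i _ => by split_ifs <;> simp [hpair]) (mem_range.2 ha)
      simpa [h, upperPairing] using this
    rw [if_neg h.ne']
    nlinarith

variable (hpos : ∀ j, 1 ≤ j → j ≤ k₀ → 0 < nn j)
include hpos

lemma sum_radEntry_coeff_le_one {M N : ℕ} (hN : 0 < N) :
    ∑ u : Fin (repRes M (RadBase k₀ nn N)).length,
      (radEntry k₀ nn (M * N) (radRun k₀ nn M N u % k₀)).2 ≤ 1 := by
  refine (sum_comp_radRun_le M N (fun t => (radEntry k₀ nn (M * N) (t % k₀)).2)
    fun t => by simp only [radEntry]; positivity).trans ?_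
  have hterm : ∀ t ∈ range (M * k₀),
      (N : ℝ) * nn (t % k₀ + 1) * (radEntry k₀ nn (M * N) (t % k₀)).2 = 1 / (M * k₀ : ℕ) := by
    intro t ht
    have hk₀ : 0 < k₀ := Nat.pos_of_ne_zero fun h => by simp [h] at ht
    have hnn : (nn (t % k₀ + 1) : ℝ) ≠ 0 :=
      Nat.cast_ne_zero.2 (hpos (t % k₀ + 1) (by omega) (Nat.mod_lt t hk₀)).ne'
    have : (N : ℝ) ≠ 0 := Nat.cast_ne_zero.2 hN.ne'
    have : (k₀ : ℝ) ≠ 0 := Nat.cast_ne_zero.2 hk₀.ne'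
    simp only [radEntry]
    push_cast
    field_simp
  rw [sum_congr rfl hterm, sum_const, card_range, nsmul_eq_mul]
  rcases Nat.eq_zero_or_pos (M * k₀) with h | h
  · simp [h]
  · rw [mul_one_div_cancel (by positivity)]

lemma sum_upperPairing_le (hk₀ : 0 < k₀) (hratio : ratioSum k₀ nn ≤ 2 ^ (-((k₀ : ℤ) * k₀)))
    {M N : ℕ} (hM : 0 < M) (hN : 0 < N) :
    ∑ v : Fin (repRes M (RadBase k₀ nn N)).length,
      upperPairing k₀ nn (M * N) (radRun k₀ nn M N v % k₀) ≤ 2 ^ (-(k₀ : ℤ)) / k₀ := by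
  refine (sum_comp_radRun_le M N (fun t => upperPairing k₀ nn (M * N) (t % k₀))
    fun t => upperPairing_nonneg _ _).trans ?_
  rw [sum_range_mul_mod (fun b => N * nn (b + 1) * upperPairing k₀ nn (M * N) b), nsmul_eq_mul]
  calc (M : ℝ) * ∑ b ∈ range k₀, N * nn (b + 1) * upperPairing k₀ nn (M * N) b
      ≤ 2 ^ ((k₀ : ℤ) * k₀ - k₀) / k₀ * ratioSum k₀ nn := by
        rw [ratioSum_eq_sum_range, mul_sum, mul_sum]
        refine sum_le_sum fun b _ => ?_
        rw [upperPairing, mul_sum, mul_sum, mul_sum]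
        refine sum_le_sum fun i hi => ?_
        split_ifs with hbi
        · rw [mem_range] at hi
          have hni := hpos (i + 1) (by omega) hi
          have h2 : (2 : ℝ) ^ (((i : ℤ) - b) * k₀) ≤ 2 ^ ((k₀ : ℤ) * k₀ - k₀) :=
            zpow_le_zpow_right₀ one_le_two (by nlinarith)
          rw [coordPairing_radEntry]
          calc (M : ℝ) * (N * nn (b + 1) * (2 ^ (((i : ℤ) - b) * k₀)
                * (radEntry k₀ nn (M * N) i).2))
              = 2 ^ (((i : ℤ) - b) * k₀) / k₀ * (nn (b + 1) / nn (i + 1)) := by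
                simp only [radEntry]
                field_simp
                push_cast
                ring
            _ ≤ 2 ^ ((k₀ : ℤ) * k₀ - k₀) / k₀ * (nn (b + 1) / nn (i + 1)) := by gcongr
        · simp
    _ ≤ 2 ^ ((k₀ : ℤ) * k₀ - k₀) / k₀ * 2 ^ (-((k₀ : ℤ) * k₀)) := by gcongr
    _ = 2 ^ (-(k₀ : ℤ)) / k₀ := by
        rw [div_mul_eq_mul_div, ← zpow_add₀ two_ne_zero]
        ring_nf

variable (hk₀ : 0 < k₀)
include hk₀

lemma sum_coeff_le_of_snd_in_run {M₁ N₁ M₂ N₂ : ℕ} (hN₂ : 0 < N₂) (hT : M₁ * N₁ = M₂ * N₂)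
    {S : Finset (Fin (repRes M₁ (RadBase k₀ nn N₁)).length
      × Fin (repRes M₂ (RadBase k₀ nn N₂)).length)}
    (hinj : ∀ p ∈ S, ∀ q ∈ S, p.2 = q.2 → p = q) (t : ℕ)
    (hS : ∀ p ∈ S, radRun k₀ nn M₂ N₂ p.2 = t ∧ radRun k₀ nn M₁ N₁ p.1 % k₀ = t % k₀) :
    ∑ p ∈ S, (radEntry k₀ nn (M₁ * N₁) (radRun k₀ nn M₁ N₁ p.1 % k₀)).2 ≤ 1 / (M₂ * k₀) := by
  have hcard : #S ≤ N₂ * nn (t % k₀ + 1) :=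
    (card_le_card_of_injOn Prod.snd (fun p hp => mem_filter.2 ⟨mem_univ _, (hS p hp).1⟩)
      fun p hp q hq => hinj p hp q hq).trans (card_radRun_eq_le M₂ N₂ t)
  have hnn : (nn (t % k₀ + 1) : ℝ) ≠ 0 :=
    Nat.cast_ne_zero.2 (hpos _ (by omega) (Nat.mod_lt _ hk₀)).ne'
  have hN₂' : (N₂ : ℝ) ≠ 0 := Nat.cast_ne_zero.2 hN₂.ne'
  rw [sum_congr rfl fun p hp => by rw [(hS p hp).2], sum_const, nsmul_eq_mul]
  calc _ ≤ ((N₂ * nn (t % k₀ + 1) : ℕ) : ℝ) * (radEntry k₀ nn (M₁ * N₁) (t % k₀)).2 := by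
        gcongr
        simp only [radEntry]
        positivity
    _ = 1 / (M₂ * k₀) := by
        simp only [radEntry, hT]
        push_cast
        field_simp

lemma sum_diag_le {M₁ N₁ M₂ N₂ : ℕ} (hM₂ : 0 < M₂) (hN₂ : 0 < N₂) (hT : M₁ * N₁ = M₂ * N₂)
    {P : Finset (Fin (repRes M₁ (RadBase k₀ nn N₁)).length
      × Fin (repRes M₂ (RadBase k₀ nn N₂)).length)} (hP : IsMonotoneMatching P) :
    ∑ p ∈ P with radRun k₀ nn M₁ N₁ p.1 % k₀ = radRun k₀ nn M₂ N₂ p.2 % k₀,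
      (radEntry k₀ nn (M₁ * N₁) (radRun k₀ nn M₁ N₁ p.1 % k₀)).2 ≤ 1 / k₀ + M₁ / M₂ := by
  set ρ₁ := radRun k₀ nn M₁ N₁
  set ρ₂ := radRun k₀ nn M₂ N₂
  have hM₂' : (M₂ : ℝ) ≠ 0 := Nat.cast_ne_zero.2 hM₂.ne'
  have hk₀' : (k₀ : ℝ) ≠ 0 := Nat.cast_ne_zero.2 hk₀.ne'
  have hcount : (M₂ + M₁ * k₀) • (1 / ((M₂ : ℝ) * k₀)) = 1 / k₀ + M₁ / M₂ := by
    rw [nsmul_eq_mul]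
    field_simp
    push_cast
    ring
  rw [← hcount]
  refine sum_le_of_chain _ (fun p => ρ₂ p.2 / k₀) (fun p => ρ₁ p.1)
    (fun p _ => Nat.div_lt_of_lt_mul ((radRun_lt M₂ N₂ p.2).trans_eq (mul_comm _ _)))
    (fun p _ => radRun_lt M₁ N₁ p.1) ?_ _ (by positivity) ?_
  · intro p hp q hq
    have hp := (mem_filter.1 hp).1
    have hq := (mem_filter.1 hq).1
    rcases le_total p.2 q.2 with h | h
    · exact Or.inl ⟨Nat.div_le_div_right (radRun_mono M₂ N₂ h),
        radRun_mono M₁ N₁ (hP.fst_le_fst hp hq h)⟩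
    · exact Or.inr ⟨Nat.div_le_div_right (radRun_mono M₂ N₂ h),
        radRun_mono M₁ N₁ (hP.fst_le_fst hq hp h)⟩
  intro p₀ hp₀
  refine sum_coeff_le_of_snd_in_run hpos hk₀ hN₂ hT
    (fun p hp q hq => hP.injOn_snd (mem_filter.1 (mem_filter.1 hp).1).1
      (mem_filter.1 (mem_filter.1 hq).1).1) (ρ₂ p₀.2) fun p hp => ?_
  simp only [mem_filter] at hp hp₀
  have hmod : ρ₂ p.2 % k₀ = ρ₂ p₀.2 % k₀ := by rw [← hp.1.2, hp.2.2, hp₀.2]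
  exact ⟨show ρ₂ p.2 = ρ₂ p₀.2 by rw [← Nat.div_add_mod (ρ₂ p.2) k₀, hp.2.1, hmod, Nat.div_add_mod],
    hp.1.2.trans hmod⟩

lemma sum_diag_le_min {M₁ N₁ M₂ N₂ : ℕ} (hM₁ : 0 < M₁) (hN₁ : 0 < N₁) (hM₂ : 0 < M₂)
    (hN₂ : 0 < N₂) (hT : M₁ * N₁ = M₂ * N₂)
    {P : Finset (Fin (repRes M₁ (RadBase k₀ nn N₁)).length
      × Fin (repRes M₂ (RadBase k₀ nn N₂)).length)} (hP : IsMonotoneMatching P) :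
    ∑ p ∈ P with radRun k₀ nn M₁ N₁ p.1 % k₀ = radRun k₀ nn M₂ N₂ p.2 % k₀,
      (radEntry k₀ nn (M₁ * N₁) (radRun k₀ nn M₁ N₁ p.1 % k₀)).2
        ≤ 1 / k₀ + min ((M₁ : ℝ) / M₂) (M₂ / M₁) := by
  rw [← min_add_add_left]
  refine le_min (sum_diag_le hpos hk₀ hM₂ hN₂ hT hP) ?_
  refine le_of_eq_of_le ?_ (sum_diag_le hpos hk₀ hM₁ hN₁ hT.symm hP.swap)
  rw [filter_map, sum_map]
  refine sum_congr (by ext; simp [eq_comm]) fun p hp => ?_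
  simp only [mem_filter, Function.comp_apply, Equiv.coe_toEmbedding, Equiv.prodComm_apply,
    Prod.fst_swap, Prod.snd_swap] at hp ⊢
  rw [hT, hp.2]

variable (hratio : ratioSum k₀ nn ≤ 2 ^ (-((k₀ : ℤ) * k₀)))
  {M₁ N₁ M₂ N₂ : ℕ} (hM₁ : 0 < M₁) (hN₁ : 0 < N₁) (hM₂ : 0 < M₂) (hN₂ : 0 < N₂)
  (hT : M₁ * N₁ = M₂ * N₂)
include hratio hM₁ hN₁ hM₂ hN₂ hT

lemma pairSum_repRes_radBase_le {l : Fin (repRes M₁ (RadBase k₀ nn N₁)).length → ℕ}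
    {m : Fin (repRes M₂ (RadBase k₀ nn N₂)).length → ℕ} (hl : StrictMono l) (hm : StrictMono m) :
    pairSum (repRes M₁ (RadBase k₀ nn N₁)) (repRes M₂ (RadBase k₀ nn N₂)) l m
      ≤ 2 / k₀ + min ((M₁ : ℝ) / M₂) (M₂ / M₁) := by
  have hP := isMonotoneMatching_filter hl hm
  have hdiag := sum_diag_le_min hpos hk₀ hM₁ hN₁ hM₂ hN₂ hT hP
  have hlower := mul_le_mul_of_nonneg_left
    ((hP.sum_le_sum_fst _ fun u => by simp only [radEntry]; positivity).trans
      (sum_radEntry_coeff_le_one hpos (M := M₁) hN₁))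
    (zpow_pos (two_pos (α := ℝ)) (-(k₀ : ℤ))).le
  have hupper := (hP.sum_le_sum_snd
      (fun v => upperPairing k₀ nn (M₂ * N₂) (radRun k₀ nn M₂ N₂ v % k₀))
      fun v => upperPairing_nonneg _ _).trans (sum_upperPairing_le hpos hk₀ hratio hM₂ hN₂)
  rw [← hT] at hupper
  rw [pairSum_eq_sum_filter]
  simp only [get_repRes_radBase, ← hT]
  refine (sum_le_sum fun p _ => coordPairing_radEntry_le _ (Nat.mod_lt _ hk₀) _).trans ?_
  rw [sum_add_distrib, sum_add_distrib, sum_ite, sum_const_zero, add_zero, ← mul_sum]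
  linarith [two_zpow_neg_add_div_le hk₀, show (2 : ℝ) / k₀ = 1 / k₀ + 1 / k₀ by ring]

lemma bra_repRes_radBase_le :
    bra (repRes M₁ (RadBase k₀ nn N₁)) (repRes M₂ (RadBase k₀ nn N₂))
      ≤ 2 / k₀ + min ((M₁ : ℝ) / M₂) (M₂ / M₁) :=
  Real.sSup_le (by
    rintro _ ⟨l, m, hl, hm, rfl⟩
    exact pairSum_repRes_radBase_le hpos hk₀ hratio hM₁ hN₁ hM₂ hN₂ hT hl hm) (by positivity)

lemma angled_repRes_radBase_le :
    angled (repRes M₁ (RadBase k₀ nn N₁)) (repRes M₂ (RadBase k₀ nn N₂))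
      ≤ 2 / k₀ + min ((M₁ : ℝ) / M₂) (M₂ / M₁) :=
  max_le (bra_repRes_radBase_le hpos hk₀ hratio hM₁ hN₁ hM₂ hN₂ hT)
    (min_comm ((M₁ : ℝ) / M₂) (M₂ / M₁) ▸
      bra_repRes_radBase_le hpos hk₀ hratio hM₂ hN₂ hM₁ hN₁ hT.symm)

end Rademacher

lemma min_pow_div_pow_le {k₀ a b : ℕ} (hk₀ : 0 < k₀) (hab : a ≠ b) :
    min (((k₀ ^ a : ℕ) : ℝ) / (k₀ ^ b : ℕ)) ((k₀ ^ b : ℕ) / (k₀ ^ a : ℕ)) ≤ 1 / k₀ := by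
  have key : ∀ {a b : ℕ}, a < b → ((k₀ ^ a : ℕ) : ℝ) / (k₀ ^ b : ℕ) ≤ 1 / k₀ := fun {a b} h => by
    rw [div_le_div_iff₀ (by positivity) (by positivity), one_mul, ← Nat.cast_mul, ← pow_succ]
    exact_mod_cast Nat.pow_le_pow_right hk₀ h
  rcases hab.lt_or_gt with h | h
  · exact (min_le_left _ _).trans (key h)
  · exact (min_le_right _ _).trans (key h)

theorem rademacher_orthogonality_general (k : ℕ) (hk : 4 ≤ k) (k₀ : ℕ) (hk₀ : k₀ = Nat.sqrt k)
    (nn : ℕ → ℕ)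
    (hpos : ∀ j, 1 ≤ j → j ≤ k₀ → 0 < nn j)
    (hratio : ∑ j ∈ Finset.Icc 1 k₀, ∑ j' ∈ Finset.Icc 1 k₀,
      (if j < j' then (nn j : ℝ) / (nn j' : ℝ) else 0) < (2 : ℝ) ^ (-(k : ℤ)))
    (m n : ℕ) (hn : 0 < n) :
    (∀ l l', 1 ≤ l → l ≤ m → 1 ≤ l' → l' ≤ m → l ≠ l' →
      angled (Rademacher k₀ nn (n * k₀ ^ (m - l)) l)
             (Rademacher k₀ nn (n * k₀ ^ (m - l')) l') < 5 / (k₀ : ℝ)) ∧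
    (∀ l, 1 ≤ l → l ≤ m →
      angled (Rademacher k₀ nn (n * k₀ ^ (m - l)) l)
             (Rademacher k₀ nn (n * k₀ ^ (m - l)) l) ≤ 1 + 2 / (k₀ : ℝ)) := by
  have hk₀pos : 0 < k₀ := hk₀ ▸ Nat.sqrt_pos.2 (by omega)
  have hratio' : ratioSum k₀ nn ≤ 2 ^ (-((k₀ : ℤ) * k₀)) :=
    hratio.le.trans (zpow_le_zpow_right₀ one_le_two
      (neg_le_neg (by exact_mod_cast hk₀ ▸ Nat.sqrt_le k)))
  have hprod : ∀ l, 1 ≤ l → l ≤ m → k₀ ^ (l - 1) * (n * k₀ ^ (m - l)) = n * k₀ ^ (m - 1) :=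
    fun l h₁ h₂ => by rw [mul_left_comm, ← pow_add, show l - 1 + (m - l) = m - 1 by omega]
  have hR : ∀ l l', 1 ≤ l → l ≤ m → 1 ≤ l' → l' ≤ m →
      angled (Rademacher k₀ nn (n * k₀ ^ (m - l)) l) (Rademacher k₀ nn (n * k₀ ^ (m - l')) l')
        ≤ 2 / k₀ + min (((k₀ ^ (l - 1) : ℕ) : ℝ) / (k₀ ^ (l' - 1) : ℕ))
          ((k₀ ^ (l' - 1) : ℕ) / (k₀ ^ (l - 1) : ℕ)) := fun l l' h₁ h₂ h₁' h₂' =>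
    angled_repRes_radBase_le hpos hk₀pos hratio' (by positivity) (by positivity) (by positivity)
      (by positivity) ((hprod l h₁ h₂).trans (hprod l' h₁' h₂').symm)
  refine ⟨fun l l' h₁ h₂ h₁' h₂' hne => (hR l l' h₁ h₂ h₁' h₂').trans_lt ?_,
    fun l h₁ h₂ => (hR l l h₁ h₂ h₁ h₂).trans ?_⟩
  · calc _ ≤ 2 / (k₀ : ℝ) + 1 / k₀ := by
          gcongr
          exact min_pow_div_pow_le hk₀pos (by omega)
      _ < 5 / k₀ := by
          rw [← add_div]
          exact div_lt_div_of_pos_right (by norm_num) (by positivity)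
  · rw [min_self, div_self (by positivity)]
    linarith

/-- For `k ≥ 4`, `k₀ = ⌊√k⌋` and `n₁ < ⋯ < n_{k₀}` with `∑_{j<j'} n_j/n_{j'} < 2^{-k}`,
the Rademachers `R_{n·k₀^{m-l}, l}`, `l = 1,…,m`, are pairwise `5/k₀`-orthogonal, and
each satisfies `⟨R, R⟩ ≤ 1 + 2/k₀`. -/
theorem rademacher_orthogonality (k : ℕ) (hk : 4 ≤ k) (k₀ : ℕ) (hk₀ : k₀ = Nat.sqrt k)
    (nn : ℕ → ℕ)
    (hpos : ∀ j, 1 ≤ j → j ≤ k₀ → 0 < nn j)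
    (hmono : ∀ j j', 1 ≤ j → j < j' → j' ≤ k₀ → nn j < nn j')
    (hratio : ∑ j ∈ Finset.Icc 1 k₀, ∑ j' ∈ Finset.Icc 1 k₀,
      (if j < j' then (nn j : ℝ) / (nn j' : ℝ) else 0) < (2 : ℝ) ^ (-(k : ℤ)))
    (m n : ℕ) (hn : 0 < n) :
    (∀ l l', 1 ≤ l → l ≤ m → 1 ≤ l' → l' ≤ m → l ≠ l' →
      angled (Rademacher k₀ nn (n * k₀ ^ (m - l)) l)
             (Rademacher k₀ nn (n * k₀ ^ (m - l')) l') < 5 / (k₀ : ℝ)) ∧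
    (∀ l, 1 ≤ l → l ≤ m →
      angled (Rademacher k₀ nn (n * k₀ ^ (m - l)) l)
             (Rademacher k₀ nn (n * k₀ ^ (m - l)) l) ≤ 1 + 2 / (k₀ : ℝ)) :=
  rademacher_orthogonality_general k hk k₀ hk₀ nn hpos hratio m n hn

end
end
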